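/- arXiv:2312.00893 — 3 statements merged into one kernel-verified Lean document; each statement's English description precedes it below -/
import Mathlib

section
/- Let X be a space. If X does not have Property (T), then X is amenable. -/
open scoped ENNReal Classical

noncomputable section

namespace GeomPropT

variable {X : Type*}

/-- The tube of diameter `R` in `X × X`. -/
def Tube (X : Type*) [EMetricSpace X] (R : ℝ≥0∞) : Set (X × X) :=
  {p : X × X | edist p.1 p.2 ≤ R}

/-- A subset of `X × X` is controlled if it is contained in a tube of finite diameter. -/
def Controlled [EMetricSpace X] (E : Set (X × X)) : Prop :=
  ∃ R : ℝ≥0∞, R < ⊤ ∧ E ⊆ Tube X R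

/-- `X` has bounded geometry if balls of any given finite radius have uniformly
bounded cardinality. -/
def BoundedGeometry (X : Type*) [EMetricSpace X] : Prop :=
  ∀ R : ℝ≥0∞, R < ⊤ → ∃ N : ℕ, ∀ x : X,
    {y : X | edist x y ≤ R}.Finite ∧ {y : X | edist x y ≤ R}.ncard ≤ N

/-- Composition of subsets of `X × X`. -/
def compRel (E F : Set (X × X)) : Set (X × X) :=
  {p : X × X | ∃ z : X, (p.1, z) ∈ E ∧ (z, p.2) ∈ F}

/-- `compPow E n` is the `(n+1)`-fold composition `E^{∘(n+1)}`. -/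
def compPow (E : Set (X × X)) : ℕ → Set (X × X)
  | 0 => E
  | n + 1 => compRel E (compPow E n)

/-- A controlled set is generating if every controlled set is contained in some
iterated composition of it. -/
def Generating [EMetricSpace X] (E : Set (X × X)) : Prop :=
  Controlled E ∧ ∀ F : Set (X × X), Controlled F → ∃ n : ℕ, F ⊆ compPow E n

/-- `X` is monogenic if it admits a controlled generating set. -/
def Monogenic (X : Type*) [EMetricSpace X] : Prop :=
  ∃ E : Set (X × X), Generating E

/-- A "space": bounded geometry, monogenic, with at most countably many coarse
components. -/
structure IsSpace (X : Type*) [EMetricSpace X] : Prop where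
  boundedGeometry : BoundedGeometry X
  monogenic : Monogenic X
  countableComponents : Set.Countable {C : Set X | ∃ x : X, C = {y : X | edist x y < ⊤}}

/-- The support of a matrix. -/
def matSupport (T : X → X → ℂ) : Set (X × X) := {p : X × X | T p.1 p.2 ≠ 0}

/-- Membership in `ℂ_u[X]`: uniformly bounded entries and controlled support. -/
def CuElem [EMetricSpace X] (T : X → X → ℂ) : Prop :=
  (∃ M : ℝ, ∀ x y : X, ‖T x y‖ ≤ M) ∧ Controlled (matSupport T)

/-- The identity matrix. -/
def matOne : X → X → ℂ := fun x y => if x = y then 1 else 0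

/-- Matrix multiplication. -/
def matMul (T S : X → X → ℂ) : X → X → ℂ := fun x y => ∑' z : X, T x z * S z y

/-- Matrix adjoint. -/
def matStar (T : X → X → ℂ) : X → X → ℂ := fun x y => starRingEnd ℂ (T y x)

/-- Matrix powers. -/
def matPow (A : X → X → ℂ) : ℕ → X → X → ℂ
  | 0 => matOne
  | n + 1 => matMul A (matPow A n)

/-- A function `f ∈ ℓ∞(X)` viewed as a diagonal matrix. -/
def diag (f : X → ℂ) : X → X → ℂ := fun x y => if x = y then f x else 0

/-- The matrix of a partial translation: a `{0,1}`-matrix with at most one `1` in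
each row and each column, and controlled support. -/
def IsPartialTranslation [EMetricSpace X] (v : X → X → ℂ) : Prop :=
  (∀ x y : X, v x y = 0 ∨ v x y = 1) ∧
  (∀ x y y' : X, v x y = 1 → v x y' = 1 → y = y') ∧
  (∀ x x' y : X, v x y = 1 → v x' y = 1 → x = x') ∧
  Controlled (matSupport v)

/-- Membership in `S_X`: finite propagation permutation matrices. -/
def IsPermMatrix [EMetricSpace X] (A : X → X → ℂ) : Prop :=
  (∀ x y : X, A x y = 0 ∨ A x y = 1) ∧
  (∀ x : X, ∃! y : X, A x y = 1) ∧
  (∀ y : X, ∃! x : X, A x y = 1) ∧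
  Controlled (matSupport A)

/-- Membership in `A_X` with common row/column sum `c`. -/
def MemAX [EMetricSpace X] (A : X → X → ℂ) (c : ℂ) : Prop :=
  CuElem A ∧ ∀ x : X, HasSum (fun y => A x y) c ∧ HasSum (fun y => A y x) c

variable {H : Type*} [NormedAddCommGroup H] [InnerProductSpace ℂ H]

/-- A representation of `ℂ_u[X]`: a unital `*`-homomorphism into `B(H)`. -/
structure IsRepresentation [EMetricSpace X] [CompleteSpace H]
    (π : (X → X → ℂ) → (H →L[ℂ] H)) : Prop where
  map_one : π matOne = 1
  map_add : ∀ T S : X → X → ℂ, CuElem T → CuElem S → π (T + S) = π T + π S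
  map_smul : ∀ (c : ℂ) (T : X → X → ℂ), CuElem T → π (c • T) = c • π T
  map_mul : ∀ T S : X → X → ℂ, CuElem T → CuElem S → π (matMul T S) = π T * π S
  map_star : ∀ T : X → X → ℂ, CuElem T → π (matStar T) = ContinuousLinearMap.adjoint (π T)

/-- The subspace `H^π` of invariant vectors. -/
def invariantSubmodule [EMetricSpace X] (π : (X → X → ℂ) → (H →L[ℂ] H)) :
    Submodule ℂ H where
  carrier := {ξ : H | ∀ v : X → X → ℂ, IsPartialTranslation v →
    π v ξ = π (matMul v (matStar v)) ξ}
  add_mem' := by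
    intro a b ha hb v hv
    simp only [map_add, ha v hv, hb v hv]
  zero_mem' := by
    intro v hv
    simp
  smul_mem' := by
    intro c ξ hξ v hv
    simp only [map_smul, hξ v hv]

/-- `p` is the orthogonal projection onto `S`. -/
def IsOrthoProjOnto (p : H →L[ℂ] H) (S : Submodule ℂ H) : Prop :=
  ∀ ξ : H, p ξ ∈ S ∧ ξ - p ξ ∈ Sᗮ

/-- Geometric Property (T). -/
def HasPropertyT (X : Type*) [EMetricSpace X] : Prop :=
  ∀ E : Set (X × X), Generating E →
    ∃ c : ℝ, 0 < c ∧
      ∀ (H : Type) [NormedAddCommGroup H] [InnerProductSpace ℂ H] [CompleteSpace H]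
        (π : (X → X → ℂ) → (H →L[ℂ] H)), IsRepresentation π →
        ∀ ξ ∈ (invariantSubmodule π)ᗮ,
          ∃ v : X → X → ℂ, IsPartialTranslation v ∧ matSupport v ⊆ E ∧
            c * ‖ξ‖ ≤ ‖π v ξ - π (matMul v (matStar v)) ξ‖

/-- Bounded functions (elements of `ℓ∞(X)`). -/
def BddFun (f : X → ℂ) : Prop := ∃ M : ℝ, ∀ x : X, ‖f x‖ ≤ M

/-- `f ∘ t`, extended by `0`, where `t` is the partial translation with matrix `v`. -/
def translateFun (v : X → X → ℂ) (f : X → ℂ) : X → ℂ := fun y => ∑' x : X, v x y * f x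

/-- An invariant mean on `ℓ∞(X)`: a positive unital linear functional invariant
under partial translations. -/
def IsInvariantMean [EMetricSpace X] (φ : (X → ℂ) → ℂ) : Prop :=
  (∀ f g : X → ℂ, BddFun f → BddFun g → φ (f + g) = φ f + φ g) ∧
  (∀ (c : ℂ) (f : X → ℂ), BddFun f → φ (c • f) = c * φ f) ∧
  φ (fun _ => 1) = 1 ∧
  (∀ f : X → ℂ, BddFun f → (∀ x, 0 ≤ (f x).re ∧ (f x).im = 0) →
    0 ≤ (φ f).re ∧ (φ f).im = 0) ∧
  (∀ f : X → ℂ, BddFun f → ∀ v : X → X → ℂ, IsPartialTranslation v →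
    (∀ x : X, f x ≠ 0 → ∃ y : X, v x y = 1) → φ (translateFun v f) = φ f)

/-- `X` is amenable if `ℓ∞(X)` admits an invariant mean. -/
def IsAmenable (X : Type*) [EMetricSpace X] : Prop :=
  ∃ φ : (X → ℂ) → ℂ, IsInvariantMean φ

/-- A representation of `ℂ_u[X]` bundled with its Hilbert space. -/
structure HilbertRep (X : Type*) [EMetricSpace X] where
  H : Type
  [nacg : NormedAddCommGroup H]
  [ips : InnerProductSpace ℂ H]
  [cs : CompleteSpace H]
  π : (X → X → ℂ) → (H →L[ℂ] H)
  rep : IsRepresentation π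

attribute [instance] HilbertRep.nacg HilbertRep.ips HilbertRep.cs

/-!
If Property (T) fails for a generating set `E`, then for every `ε > 0` some representation has a
unit vector `ξ` with `‖π(v)ξ - π(vv*)ξ‖ ≤ ε` for all partial translations `v` supported in `E`.
The vector states `f ↦ ⟪ξ, π(diag f) ξ⟫` are states on `ℓ∞(X)`, and since
`diag (f ∘ t) = v* diag f v`, they move by at most `2 ‖f‖∞ ε` under such a `v`; an ultralimit of
them is a mean invariant under the partial translations supported in `E`. Invariance then spreads
from `E` and `F` to `E ∘ F`: by bounded geometry, a partial translation supported in `E ∘ F` splits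
into boundedly many pieces, each the composite of a partial translation supported in `F` and one
supported in `E`. As `E` is generating, the mean is invariant under every partial translation.
-/

section Controlled

variable [EMetricSpace X]

lemma Controlled.mono {E F : Set (X × X)} (hF : Controlled F) (h : E ⊆ F) : Controlled E :=
  let ⟨R, hR, hFR⟩ := hF
  ⟨R, hR, h.trans hFR⟩

lemma Controlled.compRel {E F : Set (X × X)} (hE : Controlled E) (hF : Controlled F) :
    Controlled (compRel E F) := by
  obtain ⟨R, hR, hER⟩ := hE
  obtain ⟨S, hS, hFS⟩ := hF
  refine ⟨R + S, ENNReal.add_lt_top.2 ⟨hR, hS⟩, fun p ⟨z, hxz, hzy⟩ => ?_⟩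
  calc edist p.1 p.2 ≤ edist p.1 z + edist z p.2 := edist_triangle _ _ _
    _ ≤ R + S := add_le_add (hER hxz) (hFS hzy)

lemma Controlled.compPow {E : Set (X × X)} (hE : Controlled E) (n : ℕ) :
    Controlled (compPow E n) := by
  induction n with
  | zero => exact hE
  | succ n ih => exact hE.compRel ih

end Controlled

section Matrix

lemma matMul_diag_left (f : X → ℂ) (T : X → X → ℂ) :
    matMul (diag f) T = fun x y => f x * T x y := by
  funext x y
  rw [matMul, tsum_eq_single x fun z hz => by simp [diag, Ne.symm hz]]
  simp [diag]

lemma diag_mul_diag (f g : X → ℂ) : matMul (diag f) (diag g) = diag (f * g) := by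
  rw [matMul_diag_left]
  funext x y
  by_cases h : x = y <;> simp [diag, h]

lemma matStar_diag (f : X → ℂ) : matStar (diag f) = diag (fun x => starRingEnd ℂ (f x)) := by
  funext x y
  by_cases h : x = y
  · simp [matStar, diag, h]
  · simp [matStar, diag, h, Ne.symm h]

lemma matStar_matStar (T : X → X → ℂ) : matStar (matStar T) = T := by
  funext x y
  simp [matStar]

lemma diag_one : diag (1 : X → ℂ) = matOne := rfl

lemma diag_add (f g : X → ℂ) : diag (f + g) = diag f + diag g := by
  funext x y
  by_cases h : x = y <;> simp [diag, h]

lemma diag_smul (c : ℂ) (f : X → ℂ) : diag (c • f) = c • diag f := by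
  funext x y
  by_cases h : x = y <;> simp [diag, h]

lemma BddFun.add {f g : X → ℂ} (hf : BddFun f) (hg : BddFun g) : BddFun (f + g) :=
  let ⟨M, hM⟩ := hf
  let ⟨N, hN⟩ := hg
  ⟨M + N, fun x => (norm_add_le _ _).trans (add_le_add (hM x) (hN x))⟩

lemma BddFun.smul {f : X → ℂ} (c : ℂ) (hf : BddFun f) : BddFun (c • f) :=
  let ⟨M, hM⟩ := hf
  ⟨‖c‖ * M, fun x => by
    rw [Pi.smul_apply, smul_eq_mul, norm_mul]
    exact mul_le_mul_of_nonneg_left (hM x) (norm_nonneg c)⟩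

lemma BddFun.sum {ι : Type*} (s : Finset ι) {f : ι → X → ℂ} (hf : ∀ i ∈ s, BddFun (f i)) :
    BddFun (∑ i ∈ s, f i) := by
  classical
  induction s using Finset.induction_on with
  | empty => exact ⟨0, fun x => by simp⟩
  | insert a s ha ih =>
    rw [Finset.sum_insert ha]
    exact (hf a (s.mem_insert_self a)).add (ih fun i hi => hf i (Finset.mem_insert_of_mem hi))

lemma BddFun.exists_nonneg {f : X → ℂ} (hf : BddFun f) : ∃ M, 0 ≤ M ∧ ∀ x, ‖f x‖ ≤ M :=
  let ⟨M, hM⟩ := hf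
  ⟨max M 0, le_max_right _ _, fun x => (hM x).trans (le_max_left _ _)⟩

lemma matStar_diag_mul_diag (f : X → ℂ) :
    matMul (matStar (diag f)) (diag f) = diag (fun x => (‖f x‖ : ℂ) ^ 2) := by
  rw [matStar_diag, diag_mul_diag]
  congr 1
  funext x
  exact Complex.conj_mul' (f x)

lemma BddFun.normSq {f : X → ℂ} (hf : BddFun f) : BddFun (fun x => (‖f x‖ : ℂ) ^ 2) :=
  let ⟨M, hM⟩ := hf
  ⟨M ^ 2, fun x => by simpa using pow_le_pow_left₀ (norm_nonneg _) (hM x) 2⟩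

variable [EMetricSpace X]

lemma cuElem_diag {f : X → ℂ} (hf : BddFun f) : CuElem (diag f) := by
  obtain ⟨M, hM0, hM⟩ := hf.exists_nonneg
  refine ⟨⟨M, fun x y => ?_⟩, 0, ENNReal.zero_lt_top, fun p hp => ?_⟩
  · by_cases h : x = y
    · simpa [diag, h] using hM y
    · simpa [diag, h] using hM0
  · by_cases h : p.1 = p.2
    · simp [Tube, h]
    · simp [matSupport, diag, h] at hp

lemma CuElem.matStar {T : X → X → ℂ} (hT : CuElem T) : CuElem (matStar T) := by
  obtain ⟨⟨M, hM⟩, R, hR, hTR⟩ := hT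
  refine ⟨⟨M, fun x y => by simpa [GeomPropT.matStar] using hM y x⟩, R, hR, fun p hp => ?_⟩
  have : (p.2, p.1) ∈ matSupport T := fun h => hp (by simp [GeomPropT.matStar, h])
  simpa [Tube, edist_comm] using hTR this

lemma CuElem.diag_mul {f : X → ℂ} {T : X → X → ℂ} (hf : BddFun f) (hT : CuElem T) :
    CuElem (matMul (diag f) T) := by
  obtain ⟨M, hM0, hM⟩ := hf.exists_nonneg
  obtain ⟨⟨N, hN⟩, hTc⟩ := hT
  rw [matMul_diag_left]
  refine ⟨⟨M * N, fun x y => ?_⟩, hTc.mono fun p hp => right_ne_zero_of_mul hp⟩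
  rw [norm_mul]
  exact mul_le_mul (hM x) (hN x y) (norm_nonneg _) hM0

end Matrix

namespace IsPartialTranslation

variable [EMetricSpace X] {v : X → X → ℂ}

lemma eq_zero_of_ne_one (hv : IsPartialTranslation v) {x y : X} (h : v x y ≠ 1) : v x y = 0 :=
  (hv.1 x y).resolve_right h

lemma cuElem (hv : IsPartialTranslation v) : CuElem v :=
  ⟨⟨1, fun x y => by rcases hv.1 x y with h | h <;> simp [h]⟩, hv.2.2.2⟩

lemma matStar_eq_one_iff (hv : IsPartialTranslation v) {x y : X} :
    matStar v x y = 1 ↔ v y x = 1 := by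
  rcases hv.1 y x with h | h <;> simp [matStar, h]

lemma matStar (hv : IsPartialTranslation v) : IsPartialTranslation (matStar v) :=
  ⟨fun x y => by rcases hv.1 y x with h | h <;> simp [GeomPropT.matStar, h],
    fun x y y' h h' => hv.2.2.1 y y' x (hv.matStar_eq_one_iff.1 h) (hv.matStar_eq_one_iff.1 h'),
    fun x x' y h h' => hv.2.1 y x x' (hv.matStar_eq_one_iff.1 h) (hv.matStar_eq_one_iff.1 h'),
    hv.cuElem.matStar.2⟩

lemma translateFun_apply_of_eq_one (hv : IsPartialTranslation v) (f : X → ℂ) {x y : X}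
    (h : v x y = 1) : translateFun v f y = f x := by
  rw [translateFun, tsum_eq_single x fun x' hx' => by
    rw [hv.eq_zero_of_ne_one fun h' => hx' (hv.2.2.1 x' x y h' h), zero_mul], h, one_mul]

lemma translateFun_apply_of_forall_ne (hv : IsPartialTranslation v) (f : X → ℂ) {y : X}
    (h : ∀ x, v x y ≠ 1) : translateFun v f y = 0 := by
  simp [translateFun, hv.eq_zero_of_ne_one (h _)]

lemma norm_translateFun_le (hv : IsPartialTranslation v) {f : X → ℂ} {M : ℝ} (hM0 : 0 ≤ M)
    (hM : ∀ x, ‖f x‖ ≤ M) (y : X) : ‖translateFun v f y‖ ≤ M := by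
  by_cases hy : ∃ x, v x y = 1
  · obtain ⟨x, hx⟩ := hy
    simpa [hv.translateFun_apply_of_eq_one f hx] using hM x
  · push Not at hy
    simpa [hv.translateFun_apply_of_forall_ne f hy] using hM0

lemma bddFun_translateFun (hv : IsPartialTranslation v) {f : X → ℂ} (hf : BddFun f) :
    BddFun (translateFun v f) :=
  let ⟨M, hM0, hM⟩ := hf.exists_nonneg
  ⟨M, hv.norm_translateFun_le hM0 hM⟩

lemma diag_translateFun (hv : IsPartialTranslation v) (f : X → ℂ) :
    diag (translateFun v f) = matMul (GeomPropT.matStar v) (matMul (diag f) v) := by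
  rw [matMul_diag_left]
  funext y y'
  by_cases hy : ∃ x, v x y = 1
  · obtain ⟨x, hx⟩ := hy
    rw [matMul, tsum_eq_single x fun x' hx' => by
      simp [GeomPropT.matStar, hv.eq_zero_of_ne_one fun h => hx' (hv.2.2.1 x' x y h hx)]]
    by_cases hyy : y = y'
    · subst hyy
      simp [GeomPropT.matStar, diag, hx, hv.translateFun_apply_of_eq_one f hx]
    · simp [GeomPropT.matStar, diag, hx, hyy,
        hv.eq_zero_of_ne_one fun h => hyy (hv.2.1 x y y' hx h)]
  · push Not at hy
    have hzero : ∀ x, v x y = 0 := fun x => hv.eq_zero_of_ne_one (hy x)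
    by_cases hyy : y = y'
    · subst hyy
      simp [matMul, GeomPropT.matStar, diag, hzero, hv.translateFun_apply_of_forall_ne f hy]
    · simp [matMul, GeomPropT.matStar, diag, hyy, hzero]

lemma matStar_mul_self (hv : IsPartialTranslation v) :
    matMul (GeomPropT.matStar v) v = diag (translateFun v 1) := by
  rw [hv.diag_translateFun, diag_one]
  congr 1
  rw [← diag_one, matMul_diag_left]
  simp

lemma mul_matStar_self (hv : IsPartialTranslation v) :
    matMul v (GeomPropT.matStar v) = diag (translateFun (GeomPropT.matStar v) 1) := by
  simpa [matStar_matStar] using hv.matStar.matStar_mul_self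

/-- `translateFun (matStar v) 1` is the indicator function of the range of `v`. -/
lemma mul_translateFun_matStar_one (hv : IsPartialTranslation v) {f : X → ℂ}
    (hf : ∀ x, f x ≠ 0 → ∃ y, v x y = 1) : f * translateFun (GeomPropT.matStar v) 1 = f := by
  funext x
  by_cases hfx : f x = 0
  · simp [hfx]
  · obtain ⟨y, hy⟩ := hf x hfx
    simp [hv.matStar.translateFun_apply_of_eq_one 1 (hv.matStar_eq_one_iff.2 hy)]

end IsPartialTranslation

def relMatrix (R : Set (X × X)) : X → X → ℂ := fun x y => if (x, y) ∈ R then 1 else 0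

lemma relMatrix_eq_one_iff {R : Set (X × X)} {x y : X} : relMatrix R x y = 1 ↔ (x, y) ∈ R := by
  by_cases h : (x, y) ∈ R <;> simp [relMatrix, h]

lemma isPartialTranslation_relMatrix [EMetricSpace X] {R : Set (X × X)}
    (hrow : ∀ x y y', (x, y) ∈ R → (x, y') ∈ R → y = y')
    (hcol : ∀ x x' y, (x, y) ∈ R → (x', y) ∈ R → x = x') (hR : Controlled R) :
    IsPartialTranslation (relMatrix R) := by
  refine ⟨fun x y => ?_, fun x y y' h h' => hrow x y y' (relMatrix_eq_one_iff.1 h)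
    (relMatrix_eq_one_iff.1 h'), fun x x' y h h' => hcol x x' y (relMatrix_eq_one_iff.1 h)
    (relMatrix_eq_one_iff.1 h'), hR.mono fun p hp => ?_⟩
  · by_cases h : (x, y) ∈ R <;> simp [relMatrix, h]
  · by_contra h
    exact hp (by simp [relMatrix, h])

lemma matSupport_relMatrix_subset (R : Set (X × X)) : matSupport (relMatrix R) ⊆ R := by
  intro p hp
  by_contra h
  exact hp (by simp [relMatrix, h])

section Representation

variable [EMetricSpace X]

lemma norm_inner_apply_sub_inner_apply_le (T : H →L[ℂ] H) (a b : H) :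
    ‖inner ℂ a (T a) - inner ℂ b (T b)‖ ≤ ‖T‖ * ‖a - b‖ * (‖a‖ + ‖b‖) := by
  have hsplit : inner ℂ a (T a) - inner ℂ b (T b)
      = inner ℂ (a - b) (T a) + inner ℂ b (T (a - b)) := by
    rw [inner_sub_left, map_sub, inner_sub_right]
    ring
  calc ‖inner ℂ a (T a) - inner ℂ b (T b)‖
      ≤ ‖a - b‖ * ‖T a‖ + ‖b‖ * ‖T (a - b)‖ := by
        rw [hsplit]
        exact (norm_add_le _ _).trans (add_le_add (norm_inner_le_norm _ _) (norm_inner_le_norm _ _))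
    _ ≤ ‖a - b‖ * (‖T‖ * ‖a‖) + ‖b‖ * (‖T‖ * ‖a - b‖) := by
        gcongr <;> exact T.le_opNorm _
    _ = ‖T‖ * ‖a - b‖ * (‖a‖ + ‖b‖) := by ring

namespace IsRepresentation

variable [CompleteSpace H] {π : (X → X → ℂ) → (H →L[ℂ] H)}

lemma inner_map_matStar_mul_self (hπ : IsRepresentation π) {T : X → X → ℂ} (hT : CuElem T)
    (ξ : H) : inner ℂ ξ (π (matMul (matStar T) T) ξ) = (‖π T ξ‖ : ℂ) ^ 2 := by
  rw [hπ.map_mul _ _ hT.matStar hT, hπ.map_star _ hT, mul_apply_eq_comp,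
    ContinuousLinearMap.adjoint_inner_right]
  exact inner_self_eq_norm_sq_to_K _

lemma norm_map_diag_le (hπ : IsRepresentation π) {f : X → ℂ} {M : ℝ} (hM : 0 ≤ M)
    (hf : ∀ x, ‖f x‖ ≤ M) (ξ : H) : ‖π (diag f) ξ‖ ≤ M * ‖ξ‖ := by
  -- `g` completes `f` to `|f|² + |g|² = M²`, so `‖π(diag f) ξ‖² + ‖π(diag g) ξ‖² = M² ‖ξ‖²`.
  set g : X → ℂ := fun x => (Real.sqrt (M ^ 2 - ‖f x‖ ^ 2) : ℂ)
  have hsq : ∀ x, ‖f x‖ ^ 2 ≤ M ^ 2 := fun x => pow_le_pow_left₀ (norm_nonneg _) (hf x) 2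
  have hfb : BddFun f := ⟨M, hf⟩
  have hgb : BddFun g := ⟨M, fun x => by
    rw [Complex.norm_real, Real.norm_of_nonneg (Real.sqrt_nonneg _)]
    exact (Real.sqrt_le_sqrt (by linarith [sq_nonneg ‖f x‖])).trans_eq (Real.sqrt_sq hM)⟩
  have hsum : (fun x => (‖f x‖ : ℂ) ^ 2) + (fun x => (‖g x‖ : ℂ) ^ 2) = (M : ℂ) ^ 2 • 1 := by
    funext x
    have : ‖g x‖ ^ 2 = M ^ 2 - ‖f x‖ ^ 2 := by
      simp [g, Real.sq_sqrt (sub_nonneg.2 (hsq x))]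
    simp only [Pi.add_apply, Pi.smul_apply, Pi.one_apply, smul_eq_mul, mul_one]
    exact_mod_cast (by linarith : ‖f x‖ ^ 2 + ‖g x‖ ^ 2 = M ^ 2)
  have hpyth : (‖π (diag f) ξ‖ : ℂ) ^ 2 + (‖π (diag g) ξ‖ : ℂ) ^ 2
      = (M : ℂ) ^ 2 * (‖ξ‖ : ℂ) ^ 2 := by
    rw [← hπ.inner_map_matStar_mul_self (cuElem_diag hfb), ← hπ.inner_map_matStar_mul_self
      (cuElem_diag hgb), matStar_diag_mul_diag, matStar_diag_mul_diag, ← inner_add_right,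
      ← add_apply, ← hπ.map_add _ _ (cuElem_diag ?_) (cuElem_diag ?_),
      ← diag_add, hsum, diag_smul, hπ.map_smul _ _ (cuElem_diag ⟨1, by simp⟩), diag_one,
      hπ.map_one, smul_apply, inner_smul_right, one_apply_eq_self,
      inner_self_eq_norm_sq_to_K]
    · rfl
    · exact hfb.normSq
    · exact hgb.normSq
  have : ‖π (diag f) ξ‖ ^ 2 + ‖π (diag g) ξ‖ ^ 2 = (M * ‖ξ‖) ^ 2 := by
    rw [mul_pow]; exact_mod_cast hpyth
  exact (sq_le_sq₀ (norm_nonneg _) (by positivity)).1 (by nlinarith [sq_nonneg ‖π (diag g) ξ‖])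

lemma norm_map_le_of_isPartialTranslation (hπ : IsRepresentation π) {v : X → X → ℂ}
    (hv : IsPartialTranslation v) (ξ : H) : ‖π v ξ‖ ≤ ‖ξ‖ := by
  have hχ : ∀ y, ‖translateFun v 1 y‖ ≤ 1 := hv.norm_translateFun_le zero_le_one (by simp)
  have hsq : ‖π v ξ‖ ^ 2 ≤ ‖ξ‖ ^ 2 :=
    calc ‖π v ξ‖ ^ 2 = ‖inner ℂ ξ (π (diag (translateFun v 1)) ξ)‖ := by
          rw [← hv.matStar_mul_self, hπ.inner_map_matStar_mul_self hv.cuElem]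
          simp
      _ ≤ ‖ξ‖ * (1 * ‖ξ‖) :=
          (norm_inner_le_norm _ _).trans (mul_le_mul_of_nonneg_left
            (hπ.norm_map_diag_le zero_le_one hχ ξ) (norm_nonneg _))
      _ = ‖ξ‖ ^ 2 := by ring
  exact (sq_le_sq₀ (norm_nonneg _) (norm_nonneg _)).1 hsq

lemma norm_map_mul_matStar_le (hπ : IsRepresentation π) {v : X → X → ℂ}
    (hv : IsPartialTranslation v) (ξ : H) : ‖π (matMul v (matStar v)) ξ‖ ≤ ‖ξ‖ := by
  rw [hv.mul_matStar_self]
  simpa using hπ.norm_map_diag_le zero_le_one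
    (hv.matStar.norm_translateFun_le zero_le_one (by simp)) ξ

lemma inner_map_diag_translateFun (hπ : IsRepresentation π) {v : X → X → ℂ}
    (hv : IsPartialTranslation v) {f : X → ℂ} (hf : BddFun f) (ξ : H) :
    inner ℂ ξ (π (diag (translateFun v f)) ξ) = inner ℂ (π v ξ) (π (diag f) (π v ξ)) := by
  rw [hv.diag_translateFun, hπ.map_mul _ _ hv.cuElem.matStar (hv.cuElem.diag_mul hf),
    hπ.map_star _ hv.cuElem, mul_apply_eq_comp, ContinuousLinearMap.adjoint_inner_right,
    hπ.map_mul _ _ (cuElem_diag hf) hv.cuElem, mul_apply_eq_comp]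

lemma inner_map_diag_of_subset_range (hπ : IsRepresentation π) {v : X → X → ℂ}
    (hv : IsPartialTranslation v) {f : X → ℂ} (hf : BddFun f)
    (hsupp : ∀ x, f x ≠ 0 → ∃ y, v x y = 1) (ξ : H) :
    inner ℂ ξ (π (diag f) ξ) = inner ℂ (π (matMul v (matStar v)) ξ)
      (π (diag f) (π (matMul v (matStar v)) ξ)) := by
  set χ := translateFun (matStar v) 1
  have hχ : BddFun χ := hv.matStar.bddFun_translateFun ⟨1, by simp⟩
  have hP : ContinuousLinearMap.adjoint (π (matMul v (matStar v))) = π (matMul v (matStar v)) := by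
    rw [hπ.map_mul _ _ hv.cuElem hv.cuElem.matStar, hπ.map_star _ hv.cuElem,
      ContinuousLinearMap.mul_def, ContinuousLinearMap.adjoint_comp,
      ContinuousLinearMap.adjoint_adjoint]
  have hf' : diag f = matMul (diag χ) (matMul (diag f) (diag χ)) := by
    rw [diag_mul_diag, diag_mul_diag, hv.mul_translateFun_matStar_one hsupp, mul_comm,
      hv.mul_translateFun_matStar_one hsupp]
  conv_lhs => rw [hf', hπ.map_mul _ _ (cuElem_diag hχ) ((cuElem_diag hχ).diag_mul hf),
    hπ.map_mul _ _ (cuElem_diag hf) (cuElem_diag hχ), mul_apply_eq_comp, mul_apply_eq_comp,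
    ← hv.mul_matStar_self]
  rw [← ContinuousLinearMap.adjoint_inner_left, hP]

lemma norm_inner_map_diag_translateFun_sub_le (hπ : IsRepresentation π) {v : X → X → ℂ}
    (hv : IsPartialTranslation v) {f : X → ℂ} {M : ℝ} (hM : 0 ≤ M) (hf : ∀ x, ‖f x‖ ≤ M)
    (hsupp : ∀ x, f x ≠ 0 → ∃ y, v x y = 1) (ξ : H) :
    ‖inner ℂ ξ (π (diag (translateFun v f)) ξ) - inner ℂ ξ (π (diag f) ξ)‖
      ≤ 2 * M * ‖ξ‖ * ‖π v ξ - π (matMul v (matStar v)) ξ‖ := by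
  rw [hπ.inner_map_diag_translateFun hv ⟨M, hf⟩,
    hπ.inner_map_diag_of_subset_range hv ⟨M, hf⟩ hsupp ξ]
  set P := π (matMul v (matStar v))
  refine (norm_inner_apply_sub_inner_apply_le _ _ _).trans ?_
  have hD : ‖π (diag f)‖ ≤ M :=
    ContinuousLinearMap.opNorm_le_bound _ hM (hπ.norm_map_diag_le hM hf)
  have hsum : ‖π v ξ‖ + ‖P ξ‖ ≤ 2 * ‖ξ‖ := by
    linarith [hπ.norm_map_le_of_isPartialTranslation hv ξ, hπ.norm_map_mul_matStar_le hv ξ]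
  calc ‖π (diag f)‖ * ‖π v ξ - P ξ‖ * (‖π v ξ‖ + ‖P ξ‖) ≤ M * ‖π v ξ - P ξ‖ * (2 * ‖ξ‖) := by
        gcongr
    _ = 2 * M * ‖ξ‖ * ‖π v ξ - P ξ‖ := by ring

end IsRepresentation

end Representation

section Mean

open Filter Topology
open scoped ComplexOrder

def IsMean (φ : (X → ℂ) → ℂ) : Prop :=
  (∀ f g : X → ℂ, BddFun f → BddFun g → φ (f + g) = φ f + φ g) ∧
  (∀ (c : ℂ) (f : X → ℂ), BddFun f → φ (c • f) = c * φ f) ∧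
  φ (fun _ => 1) = 1 ∧
  (∀ f : X → ℂ, BddFun f → (∀ x, 0 ≤ (f x).re ∧ (f x).im = 0) →
    0 ≤ (φ f).re ∧ (φ f).im = 0)

variable [EMetricSpace X]

def TranslationInvariantOn (φ : (X → ℂ) → ℂ) (S : Set (X × X)) : Prop :=
  ∀ f : X → ℂ, BddFun f → ∀ v : X → X → ℂ, IsPartialTranslation v → matSupport v ⊆ S →
    (∀ x : X, f x ≠ 0 → ∃ y : X, v x y = 1) → φ (translateFun v f) = φ f

lemma IsMean.isInvariantMean {φ : (X → ℂ) → ℂ} (hφ : IsMean φ)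
    (hinv : TranslationInvariantOn φ Set.univ) : IsInvariantMean φ :=
  ⟨hφ.1, hφ.2.1, hφ.2.2.1, hφ.2.2.2, fun f hf v hv => hinv f hf v hv (Set.subset_univ _)⟩

def AlmostInvariant (W : HilbertRep X) (ξ : W.H) (E : Set (X × X)) (ε : ℝ) : Prop :=
  ∀ v : X → X → ℂ, IsPartialTranslation v → matSupport v ⊆ E →
    ‖W.π v ξ - W.π (matMul v (matStar v)) ξ‖ ≤ ε

def vectorState (W : HilbertRep X) (ξ : W.H) (f : X → ℂ) : ℂ := inner ℂ ξ (W.π (diag f) ξ)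

namespace vectorState

variable (W : HilbertRep X) {ξ : W.H}

lemma add {f g : X → ℂ} (hf : BddFun f) (hg : BddFun g) :
    vectorState W ξ (f + g) = vectorState W ξ f + vectorState W ξ g := by
  rw [vectorState, diag_add, W.rep.map_add _ _ (cuElem_diag hf) (cuElem_diag hg), add_apply,
    inner_add_right, vectorState, vectorState]

lemma smul (c : ℂ) {f : X → ℂ} (hf : BddFun f) :
    vectorState W ξ (c • f) = c * vectorState W ξ f := by
  rw [vectorState, diag_smul, W.rep.map_smul _ _ (cuElem_diag hf), smul_apply, inner_smul_right,
    vectorState]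

lemma one (hξ : ‖ξ‖ = 1) : vectorState W ξ (fun _ => 1) = 1 := by
  rw [vectorState, show (fun _ : X => (1 : ℂ)) = 1 from rfl, diag_one, W.rep.map_one,
    one_apply_eq_self, inner_self_eq_norm_sq_to_K, hξ]
  simp

lemma nonneg {f : X → ℂ} (hf : BddFun f) (hpos : ∀ x, 0 ≤ f x) : 0 ≤ vectorState W ξ f := by
  set g : X → ℂ := fun x => (Real.sqrt (f x).re : ℂ)
  have hg : BddFun g := by
    obtain ⟨M, hM0, hM⟩ := hf.exists_nonneg
    refine ⟨Real.sqrt M, fun x => ?_⟩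
    rw [Complex.norm_real, Real.norm_of_nonneg (Real.sqrt_nonneg _)]
    exact Real.sqrt_le_sqrt ((Complex.re_le_norm _).trans (hM x))
  have hfg : diag f = matMul (matStar (diag g)) (diag g) := by
    rw [matStar_diag_mul_diag]
    congr 1
    funext x
    have hre := Complex.nonneg_iff.1 (hpos x)
    simp only [g, Complex.norm_real, Real.norm_of_nonneg (Real.sqrt_nonneg _), ← Complex.ofReal_pow,
      Real.sq_sqrt hre.1]
    exact Complex.ext rfl (by simp [hre.2])
  rw [vectorState, hfg, W.rep.inner_map_matStar_mul_self (cuElem_diag hg), ← Complex.ofReal_pow]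
  exact Complex.zero_le_real.2 (sq_nonneg _)

lemma norm_le (hξ : ‖ξ‖ = 1) {f : X → ℂ} {M : ℝ} (hM : 0 ≤ M) (hf : ∀ x, ‖f x‖ ≤ M) :
    ‖vectorState W ξ f‖ ≤ M :=
  calc ‖vectorState W ξ f‖ ≤ ‖ξ‖ * ‖W.π (diag f) ξ‖ := norm_inner_le_norm _ _
    _ ≤ 1 * (M * 1) := by
        rw [← hξ]
        exact mul_le_mul_of_nonneg_left (W.rep.norm_map_diag_le hM hf ξ) (norm_nonneg _)
    _ = M := by ring

lemma norm_translateFun_sub_le (hξ : ‖ξ‖ = 1) {E : Set (X × X)} {ε : ℝ}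
    (hinv : AlmostInvariant W ξ E ε) {v : X → X → ℂ} (hv : IsPartialTranslation v)
    (hvE : matSupport v ⊆ E) {f : X → ℂ} {M : ℝ} (hM : 0 ≤ M) (hf : ∀ x, ‖f x‖ ≤ M)
    (hsupp : ∀ x, f x ≠ 0 → ∃ y, v x y = 1) :
    ‖vectorState W ξ (translateFun v f) - vectorState W ξ f‖ ≤ 2 * M * ε := by
  have := W.rep.norm_inner_map_diag_translateFun_sub_le hv hM hf hsupp ξ
  rw [hξ, mul_one] at this
  exact this.trans (mul_le_mul_of_nonneg_left (hinv v hv hvE) (by positivity))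

end vectorState

lemma tendsto_limUnder_of_forall_norm_le {ι : Type*} (U : Ultrafilter ι) {u : ι → ℂ} {M : ℝ}
    (h : ∀ i, ‖u i‖ ≤ M) : Tendsto u U (𝓝 (limUnder (U : Filter ι) u)) := by
  refine tendsto_nhds_limUnder ?_
  obtain ⟨z, -, hz⟩ := (isCompact_closedBall (0 : ℂ) M).ultrafilter_le_nhds (U.map u)
    (le_principal_iff.2 (mem_map.2 (univ_mem' fun i => show u i ∈ Metric.closedBall 0 M by
      simpa using h i)))
  exact ⟨z, hz⟩

theorem exists_isMean_translationInvariantOn {E : Set (X × X)}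
    (h : ∀ ε > 0, ∃ W : HilbertRep X, ∃ ξ : W.H, ‖ξ‖ = 1 ∧ AlmostInvariant W ξ E ε) :
    ∃ φ : (X → ℂ) → ℂ, IsMean φ ∧ TranslationInvariantOn φ E := by
  choose W ξ hξ hinv using fun n : ℕ => h (1 / (n + 1)) Nat.one_div_pos_of_nat
  set U : Ultrafilter ℕ := Ultrafilter.of atTop
  set ω : (X → ℂ) → ℕ → ℂ := fun f n => vectorState (W n) (ξ n) f
  have hlim : ∀ f, BddFun f → Tendsto (ω f) U (𝓝 (limUnder (U : Filter ℕ) (ω f))) := by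
    intro f hf
    obtain ⟨M, hM0, hM⟩ := hf.exists_nonneg
    exact tendsto_limUnder_of_forall_norm_le U fun n => vectorState.norm_le _ (hξ n) hM0 hM
  refine ⟨fun f => limUnder (U : Filter ℕ) (ω f), ⟨?_, ?_, ?_, ?_⟩, ?_⟩
  · intro f g hf hg
    refine tendsto_nhds_unique (hlim _ (hf.add hg)) ?_
    simp only [ω, vectorState.add _ hf hg]
    exact (hlim f hf).add (hlim g hg)
  · intro c f hf
    refine tendsto_nhds_unique (hlim _ (hf.smul c)) ?_
    simp only [ω, vectorState.smul _ c hf]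
    exact (hlim f hf).const_mul c
  · refine tendsto_nhds_unique (hlim _ ⟨1, by simp⟩) ?_
    simp only [ω, vectorState.one _ (hξ _)]
    exact tendsto_const_nhds
  · intro f hf hpos
    have h0 : (0 : ℂ) ≤ limUnder (U : Filter ℕ) (ω f) :=
      ge_of_tendsto' (hlim f hf) fun n => vectorState.nonneg _ hf fun x =>
        Complex.nonneg_iff.2 ⟨(hpos x).1, (hpos x).2.symm⟩
    exact ⟨(Complex.nonneg_iff.1 h0).1, (Complex.nonneg_iff.1 h0).2.symm⟩
  · intro f hf v hv hvE hsupp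
    obtain ⟨M, hM0, hM⟩ := hf.exists_nonneg
    have hdiff : Tendsto (fun n => ω (translateFun v f) n - ω f n) atTop (𝓝 0) := by
      refine squeeze_zero_norm (fun n => vectorState.norm_translateFun_sub_le _ (hξ n) (hinv n) hv
        hvE hM0 hM hsupp) ?_
      simpa using tendsto_one_div_add_atTop_nhds_zero_nat.const_mul (2 * M)
    exact sub_eq_zero.1 (tendsto_nhds_unique ((hlim _ (hv.bddFun_translateFun hf)).sub (hlim f hf))
      (hdiff.mono_left (Ultrafilter.of_le _)))

end Mean

lemma exists_coloring_injOn_fibers {α β : Type*} (z : α → β) (s : Set α) (N : ℕ)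
    (h : ∀ b, (s ∩ z ⁻¹' {b}).Finite ∧ (s ∩ z ⁻¹' {b}).ncard ≤ N) :
    ∃ c : α → ℕ, (∀ a ∈ s, c a < N) ∧ ∀ b, Set.InjOn c (s ∩ z ⁻¹' {b}) := by
  have hfiber : ∀ b, ∃ e : α → ℕ, s ∩ z ⁻¹' {b} ⊆ e ⁻¹' Set.Iio N ∧ Set.InjOn e (s ∩ z ⁻¹' {b}) :=
    fun b => (h b).1.exists_injOn_of_encard_le (by
      rw [← (h b).1.cast_ncard_eq, ← (Set.finite_Iio N).cast_ncard_eq, Set.ncard_Iio_nat]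
      exact_mod_cast (h b).2)
  choose e he using hfiber
  refine ⟨fun a => e (z a) a, fun a ha => (he (z a)).1 ⟨ha, rfl⟩, fun b a ha a' ha' hc => ?_⟩
  have hza : z a = b := ha.2
  have hza' : z a' = b := ha'.2
  simp only [hza, hza'] at hc
  exact (he b).2 ha ha' hc

lemma map_sum_of_map_add {φ : (X → ℂ) → ℂ}
    (hadd : ∀ f g : X → ℂ, BddFun f → BddFun g → φ (f + g) = φ f + φ g)
    {ι : Type*} (s : Finset ι) {g : ι → X → ℂ} (hg : ∀ i ∈ s, BddFun (g i)) :
    φ (∑ i ∈ s, g i) = ∑ i ∈ s, φ (g i) := by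
  classical
  induction s using Finset.induction_on with
  | empty =>
    have h0 : BddFun (0 : X → ℂ) := ⟨0, by simp⟩
    simpa using hadd 0 0 h0 h0
  | insert a s ha ih =>
    have hs : ∀ i ∈ s, BddFun (g i) := fun i hi => hg i (Finset.mem_insert_of_mem hi)
    rw [Finset.sum_insert ha, Finset.sum_insert ha, hadd _ _ (hg a (s.mem_insert_self a))
      (BddFun.sum s hs), ih hs]

lemma IsPartialTranslation.translateFun_sum [EMetricSpace X] {v : X → X → ℂ}
    (hv : IsPartialTranslation v) {ι : Type*} (s : Finset ι) (g : ι → X → ℂ) :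
    translateFun v (∑ i ∈ s, g i) = ∑ i ∈ s, translateFun v (g i) := by
  funext y
  by_cases hy : ∃ x, v x y = 1
  · obtain ⟨x, hx⟩ := hy
    simp [Finset.sum_apply, hv.translateFun_apply_of_eq_one _ hx]
  · push Not at hy
    simp [Finset.sum_apply, hv.translateFun_apply_of_forall_ne _ hy]

section Factorization

variable {v : X → X → ℂ} {z : X → X} {c : X → ℕ}

def colorPart (v : X → X → ℂ) (c : X → ℕ) (i : ℕ) (f : X → ℂ) : X → ℂ :=
  fun x => if ∃ y, v x y = 1 ∧ c y = i then f x else 0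

-- With `c` injective on the fibres of `z`, the part of `v` of colour `i` factors as
-- `y ↦ z y` (`firstLeg`) followed by `z y ↦ x` (`secondLeg`).
def firstLeg (v : X → X → ℂ) (z : X → X) (c : X → ℕ) (i : ℕ) : X → X → ℂ :=
  relMatrix {p | (∃ x, v x p.2 = 1) ∧ c p.2 = i ∧ p.1 = z p.2}

def secondLeg (v : X → X → ℂ) (z : X → X) (c : X → ℕ) (i : ℕ) : X → X → ℂ :=
  relMatrix {p | ∃ y, v p.1 y = 1 ∧ c y = i ∧ p.2 = z y}

lemma BddFun.colorPart {f : X → ℂ} (hf : BddFun f) (i : ℕ) : BddFun (colorPart v c i f) :=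
  let ⟨M, hM0, hM⟩ := hf.exists_nonneg
  ⟨M, fun x => by unfold GeomPropT.colorPart; split_ifs <;> simp [hM x, hM0]⟩

lemma sum_colorPart [EMetricSpace X] (hv : IsPartialTranslation v) {N : ℕ}
    (hcN : ∀ y, (∃ x, v x y = 1) → c y < N) {f : X → ℂ} (hsupp : ∀ x, f x ≠ 0 → ∃ y, v x y = 1) :
    ∑ i ∈ Finset.range N, colorPart v c i f = f := by
  funext x
  rw [Finset.sum_apply]
  by_cases hfx : f x = 0
  · simp [colorPart, hfx]
  · obtain ⟨y, hy⟩ := hsupp x hfx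
    have hcol : ∀ i, (∃ y', v x y' = 1 ∧ c y' = i) ↔ c y = i := fun i =>
      ⟨fun ⟨y', hy', hi⟩ => hv.2.1 x y y' hy hy' ▸ hi, fun hi => ⟨y, hy, hi⟩⟩
    simp [colorPart, hcol, hcN y ⟨x, hy⟩]

lemma isPartialTranslation_firstLeg [EMetricSpace X]
    (hc : ∀ w, Set.InjOn c ({y | ∃ x, v x y = 1} ∩ z ⁻¹' {w})) {F : Set (X × X)} (hF : Controlled F)
    (hzF : ∀ x y, v x y = 1 → (z y, y) ∈ F) (i : ℕ) :
    IsPartialTranslation (firstLeg v z c i) ∧ matSupport (firstLeg v z c i) ⊆ F := by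
  have hsub : {p : X × X | (∃ x, v x p.2 = 1) ∧ c p.2 = i ∧ p.1 = z p.2} ⊆ F := by
    rintro ⟨w, y⟩ ⟨⟨x, hx⟩, -, (rfl : w = z y)⟩
    exact hzF x y hx
  refine ⟨isPartialTranslation_relMatrix ?_ ?_ (hF.mono hsub),
    (matSupport_relMatrix_subset _).trans hsub⟩
  · rintro w y y' ⟨hy, hi, (rfl : w = z y)⟩ ⟨hy', hi', (hz : z y = z y')⟩
    exact hc (z y) ⟨hy, rfl⟩ ⟨hy', hz.symm⟩ (hi.trans hi'.symm)
  · rintro w w' y ⟨-, -, (rfl : w = z y)⟩ ⟨-, -, (rfl : w' = z y)⟩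
    rfl

lemma isPartialTranslation_secondLeg [EMetricSpace X] (hv : IsPartialTranslation v)
    (hc : ∀ w, Set.InjOn c ({y | ∃ x, v x y = 1} ∩ z ⁻¹' {w})) {E : Set (X × X)} (hE : Controlled E)
    (hzE : ∀ x y, v x y = 1 → (x, z y) ∈ E) (i : ℕ) :
    IsPartialTranslation (secondLeg v z c i) ∧ matSupport (secondLeg v z c i) ⊆ E := by
  have hsub : {p : X × X | ∃ y, v p.1 y = 1 ∧ c y = i ∧ p.2 = z y} ⊆ E := by
    rintro ⟨x, w⟩ ⟨y, hy, -, (rfl : w = z y)⟩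
    exact hzE x y hy
  refine ⟨isPartialTranslation_relMatrix ?_ ?_ (hE.mono hsub),
    (matSupport_relMatrix_subset _).trans hsub⟩
  · rintro x w w' ⟨y, hy, -, (rfl : w = z y)⟩ ⟨y', hy', -, (rfl : w' = z y')⟩
    rw [hv.2.1 x y y' hy hy']
  · rintro x x' w ⟨y, hy, hi, (rfl : w = z y)⟩ ⟨y', hy', hi', (hz : z y = z y')⟩
    rw [← hc (z y) ⟨⟨x, hy⟩, rfl⟩ ⟨⟨x', hy'⟩, hz.symm⟩ (hi.trans hi'.symm)] at hy'
    exact hv.2.2.1 x x' y hy hy'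

lemma translateFun_colorPart [EMetricSpace X] (hv : IsPartialTranslation v) {i : ℕ}
    (h₁ : IsPartialTranslation (firstLeg v z c i)) (h₂ : IsPartialTranslation (secondLeg v z c i))
    (f : X → ℂ) : translateFun v (colorPart v c i f)
      = translateFun (firstLeg v z c i) (translateFun (secondLeg v z c i) (colorPart v c i f)) := by
  funext y
  by_cases hy : ∃ x, v x y = 1
  · obtain ⟨x, hx⟩ := hy
    rw [hv.translateFun_apply_of_eq_one _ hx]
    by_cases hi : c y = i
    · rw [h₁.translateFun_apply_of_eq_one _
          ((relMatrix_eq_one_iff (x := z y)).2 ⟨⟨x, hx⟩, hi, rfl⟩),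
        h₂.translateFun_apply_of_eq_one _ (relMatrix_eq_one_iff.2 ⟨y, hx, hi, rfl⟩)]
    · rw [h₁.translateFun_apply_of_forall_ne _ fun w hw => hi (relMatrix_eq_one_iff.1 hw).2.1]
      exact if_neg fun ⟨y', hy', hi'⟩ => hi (hv.2.1 x y y' hx hy' ▸ hi')
  · rw [hv.translateFun_apply_of_forall_ne _ fun x hx => hy ⟨x, hx⟩,
      h₁.translateFun_apply_of_forall_ne _ fun w hw => hy (relMatrix_eq_one_iff.1 hw).1]

lemma exists_secondLeg_eq_one_of_colorPart_ne_zero {i : ℕ} {f : X → ℂ} {x : X}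
    (hx : colorPart v c i f x ≠ 0) :
    ∃ w, secondLeg v z c i x w = 1 := by
  unfold colorPart at hx
  split_ifs at hx with h
  · obtain ⟨y, hy, hi⟩ := h
    exact ⟨z y, relMatrix_eq_one_iff.2 ⟨y, hy, hi, rfl⟩⟩
  · exact absurd rfl hx

lemma exists_firstLeg_eq_one_of_translateFun_ne_zero [EMetricSpace X] {i : ℕ}
    (h₂ : IsPartialTranslation (secondLeg v z c i))
    {g : X → ℂ} {w : X} (hw : translateFun (secondLeg v z c i) g w ≠ 0) :
    ∃ y, firstLeg v z c i w y = 1 := by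
  by_cases h : ∃ x, secondLeg v z c i x w = 1
  · obtain ⟨x, hx⟩ := h
    obtain ⟨y, hy, hi, (rfl : w = z y)⟩ := relMatrix_eq_one_iff.1 hx
    exact ⟨y, (relMatrix_eq_one_iff (x := z y)).2 ⟨⟨x, hy⟩, hi, rfl⟩⟩
  · push Not at h
    exact absurd (h₂.translateFun_apply_of_forall_ne g h) hw

end Factorization

section Invariance

variable [EMetricSpace X] {φ : (X → ℂ) → ℂ}

theorem TranslationInvariantOn.compRel (hBG : BoundedGeometry X)
    (hadd : ∀ f g : X → ℂ, BddFun f → BddFun g → φ (f + g) = φ f + φ g)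
    {E F : Set (X × X)} (hE : Controlled E) (hF : Controlled F)
    (hφE : TranslationInvariantOn φ E) (hφF : TranslationInvariantOn φ F) :
    TranslationInvariantOn φ (compRel E F) := by
  intro f hf v hv hvEF hsupp
  have hmid : ∀ y, ∃ w, ∀ x, v x y = 1 → (x, w) ∈ E ∧ (w, y) ∈ F := by
    intro y
    by_cases hy : ∃ x, v x y = 1
    · obtain ⟨x, hx⟩ := hy
      obtain ⟨w, hxw, hwy⟩ := hvEF (show (x, y) ∈ matSupport v by simp [matSupport, hx])
      exact ⟨w, fun x' hx' => hv.2.2.1 x' x y hx' hx ▸ ⟨hxw, hwy⟩⟩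
    · exact ⟨y, fun x hx => absurd ⟨x, hx⟩ hy⟩
  choose z hz using hmid
  obtain ⟨R, hR, hFR⟩ := hF
  obtain ⟨N, hN⟩ := hBG R hR
  -- The fibres of `z` lie in `R`-balls, so `N` colours separate their points.
  obtain ⟨c, hcN, hc⟩ := exists_coloring_injOn_fibers z {y | ∃ x, v x y = 1} N fun w => by
    have hsub : {y | ∃ x, v x y = 1} ∩ z ⁻¹' {w} ⊆ {y | edist w y ≤ R} := by
      rintro y ⟨⟨x, hx⟩, rfl⟩
      exact hFR (hz y x hx).2
    exact ⟨(hN w).1.subset hsub, (Set.ncard_le_ncard hsub (hN w).1).trans (hN w).2⟩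
  have hpiece : ∀ i, φ (translateFun v (colorPart v c i f)) = φ (colorPart v c i f) := by
    intro i
    obtain ⟨h₁, h₁F⟩ :=
      isPartialTranslation_firstLeg hc ⟨R, hR, hFR⟩ (fun x y hx => (hz y x hx).2) i
    obtain ⟨h₂, h₂E⟩ := isPartialTranslation_secondLeg hv hc hE (fun x y hx => (hz y x hx).1) i
    have hfi := hf.colorPart (v := v) (c := c) i
    rw [translateFun_colorPart hv h₁ h₂, hφF _ (h₂.bddFun_translateFun hfi) _ h₁ h₁F
      fun w hw => exists_firstLeg_eq_one_of_translateFun_ne_zero h₂ hw,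
      hφE _ hfi _ h₂ h₂E fun x hx => exists_secondLeg_eq_one_of_colorPart_ne_zero hx]
  calc φ (translateFun v f)
      = φ (∑ i ∈ Finset.range N, translateFun v (colorPart v c i f)) := by
        rw [← hv.translateFun_sum, sum_colorPart hv hcN hsupp]
    _ = ∑ i ∈ Finset.range N, φ (colorPart v c i f) := by
        rw [map_sum_of_map_add hadd _ fun i _ => hv.bddFun_translateFun (hf.colorPart i)]
        exact Finset.sum_congr rfl fun i _ => hpiece i
    _ = φ f := by
        rw [← map_sum_of_map_add hadd _ fun i _ => hf.colorPart i, sum_colorPart hv hcN hsupp]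

theorem TranslationInvariantOn.compPow (hBG : BoundedGeometry X)
    (hadd : ∀ f g : X → ℂ, BddFun f → BddFun g → φ (f + g) = φ f + φ g)
    {E : Set (X × X)} (hE : Controlled E) (hφ : TranslationInvariantOn φ E) (n : ℕ) :
    TranslationInvariantOn φ (compPow E n) := by
  induction n with
  | zero => exact hφ
  | succ n ih => exact hφ.compRel hBG hadd hE (hE.compPow n) ih

theorem TranslationInvariantOn.univ_of_generating (hBG : BoundedGeometry X)
    (hadd : ∀ f g : X → ℂ, BddFun f → BddFun g → φ (f + g) = φ f + φ g)
    {E : Set (X × X)} (hE : Generating E) (hφ : TranslationInvariantOn φ E) :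
    TranslationInvariantOn φ Set.univ := by
  intro f hf v hv _ hsupp
  obtain ⟨n, hn⟩ := hE.2 _ hv.2.2.2
  exact hφ.compPow hBG hadd hE.1 n f hf v hv hn hsupp

end Invariance

lemma exists_almostInvariant_of_not_hasPropertyT [EMetricSpace X] (h : ¬ HasPropertyT X) :
    ∃ E : Set (X × X), Generating E ∧
      ∀ ε > 0, ∃ W : HilbertRep X, ∃ ξ : W.H, ‖ξ‖ = 1 ∧ AlmostInvariant W ξ E ε := by
  unfold HasPropertyT at h
  push Not at h
  obtain ⟨E, hE, hT⟩ := h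
  refine ⟨E, hE, fun ε hε => ?_⟩
  obtain ⟨H, _, _, _, π, hπ, ξ, -, hξ⟩ := hT ε hε
  have h0 : IsPartialTranslation (0 : X → X → ℂ) :=
    ⟨fun _ _ => Or.inl rfl, fun _ _ _ h => by simp at h, fun _ _ _ h => by simp at h,
      0, ENNReal.zero_lt_top, fun _ hp => (hp rfl).elim⟩
  have hξ0 : ξ ≠ 0 := by
    rintro rfl
    simpa using hξ 0 h0 fun _ hp => (hp rfl).elim
  refine ⟨⟨H, π, hπ⟩, (‖ξ‖ : ℂ)⁻¹ • ξ, norm_smul_inv_norm hξ0, fun v hv hvE => ?_⟩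
  change ‖π v _ - π (matMul v (matStar v)) _‖ ≤ ε
  rw [map_smul, map_smul, ← smul_sub, norm_smul, norm_inv, Complex.norm_real, norm_norm,
    inv_mul_le_iff₀ (norm_pos_iff.2 hξ0), mul_comm]
  exact (hξ v hv hvE).le

/-- A space without Property (T) is amenable. -/
theorem statement7 {X : Type*} [EMetricSpace X] (hX : IsSpace X)
    (h : ¬ HasPropertyT X) : IsAmenable X := by
  obtain ⟨E, hE, hvec⟩ := exists_almostInvariant_of_not_hasPropertyT h
  obtain ⟨φ, hφ, hinv⟩ := exists_isMean_translationInvariantOn hvec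
  exact ⟨φ, hφ.isInvariantMean (hinv.univ_of_generating hX.boundedGeometry hφ.1 hE)⟩

end GeomPropT
end
end

section
/- Let d be a natural number and let G = (V,E) be a countably infinite simple graph in which every vertex has degree at most d. Then there exists a proper edge colouring of G with d+1 colours, i.e. a map c : E → {1,…,d+1} such that c(e_1) ≠ c(e_2) whenever e_1 and e_2 are distinct edges sharing a vertex. -/
open scoped ENNReal Classical

noncomputable section

namespace GeomPropT

variable {X : Type*}

variable {H : Type*} [NormedAddCommGroup H] [InnerProductSpace ℂ H]

/-!
To colour an uncoloured edge `x y₀` of a partial colouring with `Δ + 1` colours, pick a colour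
`α` free at `x` and a maximal fan `y₀, …, y_k` at `x`: distinct neighbours of `x` such that the
colour of `x y_{i+1}` is free at `y_i`. Rotating the fan (`x y_i` takes the colour of `x y_{i+1}`)
uncolours `x y_k`, which can then take any colour free at both `x` and `y_k`. If some colour `β`
free at `y_k` is free at `x` too, we are done. Otherwise, by maximality, the `β`-edge at `x` goes to
some `y_j`, so `β` is free at `y_{j-1}`. The `α`/`β`-edges form a graph of maximum degree two in
which `x`, `y_{j-1}` and `y_k` have degree at most one, so they do not all lie in one component.
Swapping `α` and `β` on the component of `y_{j-1}`, or else on that of `y_k`, keeps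
`y₀, …, y_{j-1}`, resp. `y₀, …, y_k`, a fan and makes `α` free at `x` and at its last vertex.

Colouring finite edge sets one edge at a time, Rado's selection principle yields a colouring of
the whole graph.
-/

theorem _root_.List.getLastD_append_cons {α : Type*} (l₁ l₂ : List α) (a b : α) :
    (l₁ ++ b :: l₂).getLastD a = l₂.getLastD b := by
  induction l₁ generalizing a with
  | nil => exact List.getLastD_cons
  | cons a' l ih => exact List.getLastD_cons.trans (ih a')

theorem _root_.List.getLastD_mem_getLast?_cons {α : Type*} (a : α) (l : List α) :
    l.getLastD a ∈ (a :: l).getLast? := by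
  rw [List.getLast?_cons, List.getLastD_eq_getLast?]
  rfl

section

open SimpleGraph

variable {V κ : Type*}

section MaxDegreeTwo

variable {G : SimpleGraph V} {x y z : V}

/-- `S` holds the vertices a path may not step to next: none at the start, the previous vertex
further on. -/
theorem _root_.SimpleGraph.Walk.IsPath.support_prefix_or_prefix
    (h2 : ∀ a u, G.Adj a u → (G.neighborSet a \ {u}).Subsingleton) :
    ∀ {a y z : V} {S : Set V} {p : G.Walk a y} {q : G.Walk a z}, p.IsPath → q.IsPath →
      (G.neighborSet a \ S).Subsingleton → (∀ v ∈ p.support, v ∉ S) →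
      (∀ v ∈ q.support, v ∉ S) → p.support <+: q.support ∨ q.support <+: p.support
  | _, _, _, _, .nil, q, _, _, _, _, _ => .inl ⟨q.support.tail, q.cons_tail_support⟩
  | _, _, _, _, .cons _ p, .nil, _, _, _, _, _ => .inr ⟨p.support, by simp⟩
  | a, _, _, _, .cons hab p, .cons hab' q, hp, hq, hS, hpS, hqS => by
    rw [Walk.cons_isPath_iff] at hp hq
    obtain rfl := hS ⟨hab, hpS _ (by simp)⟩ ⟨hab', hqS _ (by simp)⟩
    simp only [Walk.support_cons, List.prefix_cons_inj]
    exact hp.1.support_prefix_or_prefix h2 hq.1 (h2 _ a hab.symm)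
      (fun v hv => by rintro rfl; exact hp.2 hv) (fun v hv => by rintro rfl; exact hq.2 hv)

theorem _root_.SimpleGraph.Walk.IsPath.not_subsingleton_neighborSet_of_prefix
    {p : G.Walk x y} {q : G.Walk x z} (hq : q.IsPath) (hpq : p.support <+: q.support)
    (hyx : y ≠ x) (hyz : y ≠ z) :
    ¬ (G.neighborSet y).Subsingleton := by
  obtain ⟨r, hr⟩ := hpq
  obtain ⟨a, hya, p', hp'⟩ := Walk.exists_eq_cons_of_ne hyx p.reverse
  have ha : a ∈ p.support := by
    have : a ∈ p.reverse.support := by simp [hp']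
    simpa using this
  cases r with
  | nil =>
    refine absurd ?_ hyz
    simp only [List.append_nil] at hr
    calc y = p.support.getLast p.support_ne_nil := p.getLast_support.symm
      _ = q.support.getLast q.support_ne_nil := List.getLast_congr _ _ hr
      _ = z := q.getLast_support
  | cons b r =>
    have hyb : G.Adj y b := by
      have := q.isChain_adj_support
      rw [← hr, List.isChain_append] at this
      exact this.2.2 y (by simp [List.getLast?_eq_some_getLast p.support_ne_nil,
        p.getLast_support]) b rfl
    have hab : a ≠ b := by
      have := hq.support_nodup
      rw [← hr, List.nodup_append] at this
      exact this.2.2 a ha b (by simp)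
    exact fun h => hab (h hya hyb)

theorem _root_.SimpleGraph.eq_of_reachable_of_neighborSet_subsingleton
    (h2 : ∀ a u, G.Adj a u → (G.neighborSet a \ {u}).Subsingleton)
    (hx : (G.neighborSet x).Subsingleton) (hy : (G.neighborSet y).Subsingleton)
    (hz : (G.neighborSet z).Subsingleton) (hyx : y ≠ x) (hzx : z ≠ x)
    (hxy : G.Reachable x y) (hxz : G.Reachable x z) : y = z := by
  by_contra hyz
  obtain ⟨p, hp⟩ := hxy.exists_isPath
  obtain ⟨q, hq⟩ := hxz.exists_isPath
  rcases hp.support_prefix_or_prefix h2 hq (S := ∅) (by simpa using hx) (by simp) (by simp)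
    with h | h
  · exact hq.not_subsingleton_neighborSet_of_prefix h hyx hyz hy
  · exact hp.not_subsingleton_neighborSet_of_prefix h hzx (Ne.symm hyz) hz

end MaxDegreeTwo

def coloredEdges (c : Sym2 V → Option κ) : Set (Sym2 V) := {e | c e ≠ none}

structure IsPartialEdgeColoring (G : SimpleGraph V) (c : Sym2 V → Option κ) : Prop where
  coloredEdges_subset : coloredEdges c ⊆ G.edgeSet
  proper : ∀ ⦃u v w : V⦄ ⦃γ : κ⦄, c s(u, v) = some γ → c s(u, w) = some γ → v = w

def IsFree (c : Sym2 V → Option κ) (x : V) (γ : κ) : Prop := ∀ y, c s(x, y) ≠ some γ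

variable {G : SimpleGraph V} {c : Sym2 V → Option κ} {x y z : V} {γ α β : κ}

lemma IsFree.update {o : Option κ} (h : IsFree c x γ) (ho : o ≠ some γ) (e : Sym2 V) :
    IsFree (Function.update c e o) x γ := by
  intro w
  by_cases hw : s(x, w) = e
  · simpa [hw] using ho
  · simpa [Function.update_of_ne hw] using h w

lemma IsFree.update_of_notMem {o : Option κ} (h : IsFree c x γ) {e : Sym2 V} (hx : x ∉ e) :
    IsFree (Function.update c e o) x γ := by
  intro w
  have hw : s(x, w) ≠ e := fun hw => hx (hw ▸ Sym2.mem_mk_left x w)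
  simpa [Function.update_of_ne hw] using h w

namespace IsPartialEdgeColoring

variable (hc : IsPartialEdgeColoring G c)
include hc

lemma adj (h : c s(x, y) = some γ) : G.Adj x y :=
  hc.coloredEdges_subset (show s(x, y) ∈ coloredEdges c by simp [coloredEdges, h])

lemma isFree_update_none (h : c s(x, y) = some γ) :
    IsFree (Function.update c s(x, y) none) x γ := by
  intro w hw
  by_cases hwy : s(x, w) = s(x, y)
  · simp [hwy] at hw
  · rw [Function.update_of_ne hwy] at hw
    exact hwy (by rw [hc.proper hw h])

lemma exists_isFree (hfin : (G.neighborSet x).Finite)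
    (hlt : (G.neighborSet x).ncard < Nat.card κ) : ∃ γ, IsFree c x γ := by
  by_contra! h
  simp only [IsFree, not_forall, not_not] at h
  choose f hf using h
  have hinj : Function.Injective fun γ => (⟨f γ, hc.adj (hf γ)⟩ : G.neighborSet x) := by
    intro γ δ hγδ
    simpa [hf] using congrArg (c s(x, ·)) (Subtype.ext_iff.mp hγδ)
  have := hfin.to_subtype
  have := Nat.card_le_card_of_injective _ hinj
  rw [Nat.card_coe_set_eq] at this
  omega

lemma update_none (e : Sym2 V) : IsPartialEdgeColoring G (Function.update c e none) where
  coloredEdges_subset e' he' := by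
    by_cases h : e' = e
    · simp [coloredEdges, h] at he'
    · exact hc.coloredEdges_subset (by simpa [coloredEdges, h] using he')
  proper u v w δ h₁ h₂ := by
    by_cases h : s(u, v) = e <;> by_cases h' : s(u, w) = e <;>
      simp_all [Function.update_of_ne]
    exact hc.proper h₁ h₂

lemma update_some (hxy : G.Adj x y) (hx : IsFree c x γ) (hy : IsFree c y γ) :
    IsPartialEdgeColoring G (Function.update c s(x, y) (some γ)) where
  coloredEdges_subset e he := by
    by_cases h : e = s(x, y)
    · exact h ▸ hxy
    · exact hc.coloredEdges_subset (by simpa [coloredEdges, h] using he)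
  proper u v w δ h₁ h₂ := by
    have hfree : ∀ {v}, s(u, v) = s(x, y) → IsFree c u γ := fun h => by
      rcases Sym2.eq_iff.mp h with ⟨rfl, -⟩ | ⟨rfl, -⟩ <;> assumption
    by_cases h : s(u, v) = s(x, y) <;> by_cases h' : s(u, w) = s(x, y)
    · exact Sym2.congr_right.mp (h.trans h'.symm)
    · simp only [h, Function.update_self, Function.update_of_ne h', Option.some_inj] at h₁ h₂
      exact absurd h₂ (h₁ ▸ hfree h w)
    · simp only [h', Function.update_self, Function.update_of_ne h, Option.some_inj] at h₁ h₂
      exact absurd h₁ (h₂ ▸ hfree h' v)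
    · simp only [Function.update_of_ne h, Function.update_of_ne h'] at h₁ h₂
      exact hc.proper h₁ h₂

end IsPartialEdgeColoring

section Kempe

variable {R : Set V}

def kempeSwap (c : Sym2 V → Option κ) (α β : κ) (R : Set V) : Sym2 V → Option κ :=
  fun e => if e ∈ R.sym2 then (c e).map (Equiv.swap α β) else c e

def IsKempeClosed (c : Sym2 V → Option κ) (α β : κ) (R : Set V) : Prop :=
  ∀ ⦃u v⦄, u ∈ R → c s(u, v) = some α ∨ c s(u, v) = some β → v ∈ R

def kempeGraph (c : Sym2 V → Option κ) (α β : κ) : SimpleGraph V :=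
  fromEdgeSet {e | c e = some α ∨ c e = some β}

@[simp]
lemma coloredEdges_kempeSwap : coloredEdges (kempeSwap c α β R) = coloredEdges c := by
  ext e
  by_cases he : e ∈ R.sym2 <;> simp [coloredEdges, kempeSwap, he]

lemma kempeSwap_apply_of_notMem (hx : x ∉ R) : kempeSwap c α β R s(x, y) = c s(x, y) := by
  simp [kempeSwap, hx]

lemma IsKempeClosed.kempeSwap_apply (hR : IsKempeClosed c α β R) (hx : x ∈ R) :
    kempeSwap c α β R s(x, y) = (c s(x, y)).map (Equiv.swap α β) := by
  unfold kempeSwap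
  split_ifs with h
  · rfl
  · have hy : y ∉ R := by simpa [hx] using h
    cases hxy : c s(x, y) with
    | none => rfl
    | some δ =>
      have hα : δ ≠ α := by rintro rfl; exact hy (hR hx (.inl hxy))
      have hβ : δ ≠ β := by rintro rfl; exact hy (hR hx (.inr hxy))
      simp [Equiv.swap_apply_of_ne_of_ne hα hβ]

lemma IsFree.kempeSwap_of_notMem (h : IsFree c x γ) (hx : x ∉ R) :
    IsFree (kempeSwap c α β R) x γ := fun y => by
  rw [kempeSwap_apply_of_notMem hx]; exact h y

lemma IsFree.kempeSwap_of_ne (h : IsFree c x γ) (hR : IsKempeClosed c α β R) (hα : γ ≠ α)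
    (hβ : γ ≠ β) : IsFree (kempeSwap c α β R) x γ := by
  by_cases hx : x ∈ R
  · intro y
    rw [hR.kempeSwap_apply hx]
    cases hxy : c s(x, y) with
    | none => simp
    | some δ =>
      rw [Option.map_some, Ne, Option.some_inj, Equiv.swap_apply_eq_iff,
        Equiv.swap_apply_of_ne_of_ne hα hβ]
      exact fun hδ => h y (hδ ▸ hxy)
  · exact h.kempeSwap_of_notMem hx

lemma IsFree.kempeSwap_of_mem (h : IsFree c x β) (hR : IsKempeClosed c α β R) (hx : x ∈ R) :
    IsFree (kempeSwap c α β R) x α := fun y => by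
  rw [hR.kempeSwap_apply hx]
  cases hxy : c s(x, y) with
  | none => simp
  | some δ =>
    rw [Option.map_some, Ne, Option.some_inj, Equiv.swap_apply_eq_iff, Equiv.swap_apply_left]
    exact fun hδ => h y (hδ ▸ hxy)

lemma IsKempeClosed.isPartialEdgeColoring_kempeSwap (hR : IsKempeClosed c α β R)
    (hc : IsPartialEdgeColoring G c) : IsPartialEdgeColoring G (kempeSwap c α β R) where
  coloredEdges_subset := coloredEdges_kempeSwap (c := c) ▸ hc.coloredEdges_subset
  proper u v w δ h₁ h₂ := by
    by_cases hu : u ∈ R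
    · rw [hR.kempeSwap_apply hu, Option.map_eq_some_iff] at h₁ h₂
      obtain ⟨δ₁, h₁, rfl⟩ := h₁
      obtain ⟨δ₂, h₂, hδ⟩ := h₂
      rw [(Equiv.swap α β).injective hδ] at h₂
      exact hc.proper h₁ h₂
    · rw [kempeSwap_apply_of_notMem hu] at h₁ h₂
      exact hc.proper h₁ h₂

namespace IsPartialEdgeColoring

variable (hc : IsPartialEdgeColoring G c)
include hc

lemma isKempeClosed_reachable (w : V) :
    IsKempeClosed c α β {v | (kempeGraph c α β).Reachable w v} := fun _ _ hu huv =>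
  hu.trans <| Adj.reachable <| (fromEdgeSet_adj _).mpr ⟨huv, (huv.elim hc.adj hc.adj).ne⟩

lemma kempeGraph_neighborSet_diff_subsingleton {a u : V} (hau : (kempeGraph c α β).Adj a u) :
    ((kempeGraph c α β).neighborSet a \ {u}).Subsingleton := by
  rintro v ⟨hv, hvu⟩ w ⟨hw, hwu⟩
  simp only [mem_neighborSet, kempeGraph, fromEdgeSet_adj, Set.mem_ofPred_eq] at hau hv hw
  rcases hau.1 with hu | hu <;> rcases hv.1 with hv | hv <;> rcases hw.1 with hw | hw <;>
    first
    | exact hc.proper hv hw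
    | exact absurd (hc.proper hv hu) hvu
    | exact absurd (hc.proper hw hu) hwu

lemma kempeGraph_neighborSet_subsingleton (h : IsFree c x α ∨ IsFree c x β) :
    ((kempeGraph c α β).neighborSet x).Subsingleton := by
  rintro v hv w hw
  simp only [mem_neighborSet, kempeGraph, fromEdgeSet_adj, Set.mem_ofPred_eq] at hv hw
  rcases h with h | h <;> rcases hv.1 with hv | hv <;> rcases hw.1 with hw | hw <;>
    first
    | exact hc.proper hv hw
    | exact absurd hv (h v)
    | exact absurd hw (h w)

end IsPartialEdgeColoring

end Kempe

section Fan

def FanLink (c : Sym2 V → Option κ) (x a b : V) : Prop := ∃ γ, c s(x, b) = some γ ∧ IsFree c a γ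

structure IsFan (G : SimpleGraph V) (c : Sym2 V → Option κ) (x : V) (L : List V) : Prop where
  adj : ∀ w ∈ L, G.Adj x w
  nodup : L.Nodup
  isChain : L.IsChain (FanLink c x)

variable {L : List V} {R : Set V}

lemma IsFan.length_le (hF : IsFan G c x L) (hfin : (G.neighborSet x).Finite) :
    L.length ≤ (G.neighborSet x).ncard :=
  calc L.length = L.toFinset.card := (List.toFinset_card_of_nodup hF.nodup).symm
    _ = (L.toFinset : Set V).ncard := (Set.ncard_coe_finset _).symm
    _ ≤ _ := Set.ncard_le_ncard (fun w hw => hF.adj w (by simpa using hw)) hfin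

lemma FanLink.kempeSwap_of_notMem {a b : V} (h : FanLink c x a b) (hx : x ∉ R) (ha : a ∉ R) :
    FanLink (kempeSwap c α β R) x a b := by
  obtain ⟨δ, hδ, hfree⟩ := h
  exact ⟨δ, by rwa [kempeSwap_apply_of_notMem hx], hfree.kempeSwap_of_notMem ha⟩

lemma FanLink.kempeSwap_of_ne {a b : V} (h : FanLink c x a b) (hR : IsKempeClosed c α β R)
    (hx : x ∉ R) (hxα : IsFree c x α) (hb : c s(x, b) ≠ some β) :
    FanLink (kempeSwap c α β R) x a b := by
  obtain ⟨δ, hδ, hfree⟩ := h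
  refine ⟨δ, by rwa [kempeSwap_apply_of_notMem hx], hfree.kempeSwap_of_ne hR ?_ ?_⟩
  · rintro rfl; exact hxα b hδ
  · rintro rfl; exact hb hδ

lemma IsFan.left_of_append {L₁ L₂ : List V} (hF : IsFan G c x (L₁ ++ L₂)) : IsFan G c x L₁ :=
  ⟨fun w hw => hF.adj w (List.mem_append_left _ hw), hF.nodup.sublist (List.sublist_append_left ..),
    hF.isChain.left_of_append⟩

lemma IsFan.kempeSwap_of_ne (hF : IsFan G c x L) (hR : IsKempeClosed c α β R)
    (hx : x ∉ R) (hxα : IsFree c x α) (hβ : ∀ b ∈ L.tail, c s(x, b) ≠ some β) :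
    IsFan G (kempeSwap c α β R) x L :=
  ⟨hF.adj, hF.nodup, hF.isChain.imp_of_mem_tail_imp fun _ b _ hb h =>
    h.kempeSwap_of_ne hR hx hxα (hβ b hb)⟩

namespace IsPartialEdgeColoring

variable (hc : IsPartialEdgeColoring G c)
include hc

theorem exists_isFan_forall_fanLink_mem (hfin : (G.neighborSet x).Finite) (hxy : G.Adj x y) :
    ∃ T, IsFan G c x (y :: T) ∧ ∀ z, FanLink c x (T.getLastD y) z → z ∈ y :: T := by
  by_contra! h
  have hlong : ∀ n, ∃ T, IsFan G c x (y :: T) ∧ n ≤ T.length := by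
    intro n
    induction n with
    | zero => exact ⟨[], ⟨by simpa using hxy, List.nodup_singleton y, .singleton y⟩, le_rfl⟩
    | succ n ih =>
      obtain ⟨T, hT, hn⟩ := ih
      obtain ⟨z, ⟨δ, hδ, hfree⟩, hz⟩ := h T hT
      refine ⟨T ++ [z], ⟨?_, ?_, ?_⟩, by simpa using hn⟩
      · intro w hw
        rw [← List.cons_append, List.mem_append, List.mem_singleton] at hw
        rcases hw with hw | rfl
        exacts [hT.adj w hw, hc.adj hδ]
      · rw [← List.cons_append, List.nodup_append]
        refine ⟨hT.nodup, List.nodup_singleton z, fun a ha b hb => ?_⟩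
        rintro rfl
        exact hz (List.mem_singleton.mp hb ▸ ha)
      · rw [← List.cons_append]
        refine hT.isChain.append (.singleton z) ?_
        intro a ha b hb
        obtain rfl := Option.mem_unique ha (List.getLastD_mem_getLast?_cons y T)
        obtain rfl : z = b := by simpa using hb
        exact ⟨δ, hδ, hfree⟩
  obtain ⟨T, hT, hn⟩ := hlong (G.neighborSet x).ncard
  have := hT.length_le hfin
  simp only [List.length_cons] at this
  omega

theorem exists_extension_of_isFan (hF : IsFan G c x (y :: L)) (hy : c s(x, y) = none)
    (hx : IsFree c x γ) (hl : IsFree c (L.getLastD y) γ) :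
    ∃ c' : Sym2 V → Option κ,
      IsPartialEdgeColoring G c' ∧ insert s(x, y) (coloredEdges c) ⊆ coloredEdges c' := by
  induction L generalizing c y with
  | nil =>
    refine ⟨_, hc.update_some (hF.adj y (by simp)) hx hl, fun e he => ?_⟩
    by_cases h : e = s(x, y) <;> simp_all [coloredEdges]
  | cons y₁ L ih =>
    obtain ⟨⟨γ₁, h₁, hfree₁⟩, hchain⟩ := List.isChain_cons_cons.mp hF.isChain
    have hyy₁ : y ∉ y₁ :: L := (List.nodup_cons.mp hF.nodup).1
    have hne : s(x, y) ≠ s(x, y₁) := fun h => hyy₁ (by simp [Sym2.congr_right.mp h])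
    set c₁ := Function.update (Function.update c s(x, y₁) none) s(x, y) (some γ₁) with hc₁_def
    have hc₁ : IsPartialEdgeColoring G c₁ := (hc.update_none _).update_some (hF.adj y (by simp))
      (hc.isFree_update_none h₁) (hfree₁.update (by simp) _)
    have hfree : ∀ {a δ}, a ∈ y₁ :: L → IsFree c a δ → IsFree c₁ a δ := fun ha h =>
      (h.update (by simp) _).update_of_notMem <| by
        rw [Sym2.mem_iff, not_or]
        exact ⟨(hF.adj _ (List.mem_cons_of_mem _ ha)).ne', by rintro rfl; exact hyy₁ ha⟩
    have hF₁ : IsFan G c₁ x (y₁ :: L) := by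
      refine ⟨fun w hw => hF.adj w (List.mem_cons_of_mem _ hw), hF.nodup.of_cons,
        hchain.imp_of_mem_tail_imp fun a b ha hb ⟨δ, hδ, hfreeδ⟩ => ⟨δ, ?_, hfree ha hfreeδ⟩⟩
      have hby : b ≠ y := by rintro rfl; exact hyy₁ (List.mem_cons_of_mem _ hb)
      have hby₁ : b ≠ y₁ := by rintro rfl; exact (List.nodup_cons.mp hF.nodup.of_cons).1 hb
      rwa [hc₁_def, Function.update_of_ne (Sym2.congr_right.not.mpr hby),
        Function.update_of_ne (Sym2.congr_right.not.mpr hby₁)]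
    have hx₁ : IsFree c₁ x γ :=
      (hx.update (by simp) _).update (by rintro ⟨⟩; exact hx y₁ h₁) _
    obtain ⟨c', hc', hsub⟩ := ih hc₁ hF₁ (by simp [c₁, hne.symm]) hx₁
      (hfree List.getLastD_mem_cons (List.getLastD_cons ▸ hl))
    refine ⟨c', hc', fun e he => ?_⟩
    by_cases h : e = s(x, y₁)
    · exact hsub (.inl h)
    · refine hsub (.inr ?_)
      by_cases h' : e = s(x, y) <;> simp_all [coloredEdges, c₁]

lemma isFan_kempeSwap_append {l₁ l₂ : List V} (hF : IsFan G c x ((y :: l₁) ++ z :: l₂))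
    (hz : c s(x, z) = some β) (hR : IsKempeClosed c α β R) (hx : x ∉ R) (hα : IsFree c x α)
    (hy' : l₁.getLastD y ∉ R) : IsFan G (kempeSwap c α β R) x ((y :: l₁) ++ z :: l₂) := by
  obtain ⟨hchain₁, hchain₂, hlink⟩ := List.isChain_append.mp hF.isChain
  obtain ⟨-, hnodup₂, hdisj⟩ := List.nodup_append.mp hF.nodup
  refine ⟨hF.adj, hF.nodup, List.isChain_append.mpr ⟨?_, ?_, fun a ha b hb => ?_⟩⟩
  · refine hchain₁.imp_of_mem_tail_imp fun _ b _ hb h => h.kempeSwap_of_ne hR hx hα fun hb' => ?_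
    exact hdisj b (List.mem_of_mem_tail hb) z (List.mem_cons_self ..) (hc.proper hb' hz)
  · refine hchain₂.imp_of_mem_tail_imp fun _ b _ hb h => h.kempeSwap_of_ne hR hx hα fun hb' => ?_
    exact (List.nodup_cons.mp hnodup₂).1 (hc.proper hb' hz ▸ hb)
  · obtain rfl := Option.mem_unique ha (List.getLastD_mem_getLast?_cons y l₁)
    exact (hlink _ ha b hb).kempeSwap_of_notMem hx hy'

theorem exists_extension_of_kempeSwap {ℓ : V} (hℓ : L.getLastD y = ℓ)
    (hF : IsFan G (kempeSwap c α β {v | (kempeGraph c α β).Reachable ℓ v}) x (y :: L))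
    (hy : c s(x, y) = none) (hα : IsFree c x α) (hβ : IsFree c ℓ β)
    (hx : ¬ (kempeGraph c α β).Reachable ℓ x) :
    ∃ c' : Sym2 V → Option κ,
      IsPartialEdgeColoring G c' ∧ insert s(x, y) (coloredEdges c) ⊆ coloredEdges c' := by
  set R := {v | (kempeGraph c α β).Reachable ℓ v}
  have hR : IsKempeClosed c α β R := hc.isKempeClosed_reachable ℓ
  have hxR : x ∉ R := hx
  simpa using (hR.isPartialEdgeColoring_kempeSwap hc).exists_extension_of_isFan hF
    (by rwa [kempeSwap_apply_of_notMem hxR]) (hα.kempeSwap_of_notMem hxR)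
    (hℓ ▸ hβ.kempeSwap_of_mem hR .rfl)

theorem exists_extension_of_isFan_append {l₁ l₂ : List V}
    (hF : IsFan G c x ((y :: l₁) ++ z :: l₂)) (hy : c s(x, y) = none) (hα : IsFree c x α)
    (hβ : IsFree c (l₂.getLastD z) β) (hz : c s(x, z) = some β) :
    ∃ c' : Sym2 V → Option κ,
      IsPartialEdgeColoring G c' ∧ insert s(x, y) (coloredEdges c) ⊆ coloredEdges c' := by
  set K := kempeGraph c α β
  set y' := l₁.getLastD y
  set ℓ := l₂.getLastD z
  have hdisj := (List.nodup_append.mp hF.nodup).2.2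
  have hy'β : IsFree c y' β := by
    obtain ⟨δ, hδ, hfree⟩ :=
      (List.isChain_append.mp hF.isChain).2.2 y' (List.getLastD_mem_getLast?_cons y l₁) z rfl
    obtain rfl : δ = β := Option.some_inj.mp (hδ.symm.trans hz)
    exact hfree
  by_cases hreach : K.Reachable x y'
  · have hℓx : ¬ K.Reachable ℓ x := fun h =>
      hdisj y' List.getLastD_mem_cons ℓ List.getLastD_mem_cons <|
        eq_of_reachable_of_neighborSet_subsingleton
          (fun _ _ => hc.kempeGraph_neighborSet_diff_subsingleton)
          (hc.kempeGraph_neighborSet_subsingleton (.inl hα))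
          (hc.kempeGraph_neighborSet_subsingleton (.inr hy'β))
          (hc.kempeGraph_neighborSet_subsingleton (.inr hβ))
          (hF.adj y' (List.mem_append_left _ List.getLastD_mem_cons)).ne'
          (hF.adj ℓ (List.mem_append_right _ List.getLastD_mem_cons)).ne' hreach h.symm
    exact hc.exists_extension_of_kempeSwap (List.getLastD_append_cons ..)
      (hc.isFan_kempeSwap_append hF hz (hc.isKempeClosed_reachable ℓ) hℓx hα
        fun h => hℓx (h.trans hreach.symm)) hy hα hβ hℓx
  · refine hc.exists_extension_of_kempeSwap rfl (hF.left_of_append.kempeSwap_of_ne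
      (hc.isKempeClosed_reachable y') (fun h => hreach h.symm) hα fun b hb h => ?_)
      hy hα hy'β (fun h => hreach h.symm)
    obtain rfl := hc.proper h hz
    exact hdisj b (List.mem_cons_of_mem _ hb) b (List.mem_cons_self ..) rfl

theorem exists_extension
    (hdeg : ∀ v, (G.neighborSet v).Finite ∧ (G.neighborSet v).ncard < Nat.card κ)
    (hxy : G.Adj x y) (hy : c s(x, y) = none) :
    ∃ c' : Sym2 V → Option κ,
      IsPartialEdgeColoring G c' ∧ insert s(x, y) (coloredEdges c) ⊆ coloredEdges c' := by
  obtain ⟨α, hα⟩ := hc.exists_isFree (hdeg x).1 (hdeg x).2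
  obtain ⟨T, hF, hmax⟩ := hc.exists_isFan_forall_fanLink_mem (hdeg x).1 hxy
  obtain ⟨β, hβ⟩ := hc.exists_isFree (hdeg _).1 (hdeg (T.getLastD y)).2
  by_cases hβx : IsFree c x β
  · exact hc.exists_extension_of_isFan hF hy hβx hβ
  obtain ⟨z, hz⟩ : ∃ z, c s(x, z) = some β := by simpa [IsFree] using hβx
  have hzT : z ∈ T := (List.mem_cons.mp (hmax z ⟨β, hz, hβ⟩)).resolve_left <| by
    rintro rfl; simp [hy] at hz
  obtain ⟨l₁, l₂, rfl⟩ := List.append_of_mem hzT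
  exact hc.exists_extension_of_isFan_append hF hy hα
    (List.getLastD_append_cons l₁ l₂ y z ▸ hβ) hz

lemma getD_ne {e₁ e₂ : Sym2 V} (γ₀ : κ) (h₁ : e₁ ∈ coloredEdges c) (h₂ : e₂ ∈ coloredEdges c)
    (hne : e₁ ≠ e₂) (hv : ∃ v, v ∈ e₁ ∧ v ∈ e₂) : (c e₁).getD γ₀ ≠ (c e₂).getD γ₀ := by
  obtain ⟨v, hv₁, hv₂⟩ := hv
  obtain ⟨w₁, rfl⟩ := Sym2.mem_iff_exists.mp hv₁
  obtain ⟨w₂, rfl⟩ := Sym2.mem_iff_exists.mp hv₂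
  obtain ⟨γ₁, hγ₁⟩ := Option.ne_none_iff_exists'.mp h₁
  obtain ⟨γ₂, hγ₂⟩ := Option.ne_none_iff_exists'.mp h₂
  rw [hγ₁, hγ₂, Option.getD_some, Option.getD_some]
  rintro rfl
  exact hne (by rw [hc.proper hγ₁ hγ₂])

end IsPartialEdgeColoring

end Fan

theorem exists_isPartialEdgeColoring_subset
    (hdeg : ∀ v, (G.neighborSet v).Finite ∧ (G.neighborSet v).ncard < Nat.card κ)
    (t : Finset (Sym2 V)) :
    ∃ c : Sym2 V → Option κ, IsPartialEdgeColoring G c ∧ ↑t ∩ G.edgeSet ⊆ coloredEdges c := by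
  induction t using Finset.induction_on with
  | empty => exact ⟨fun _ => none, ⟨by simp [coloredEdges], by simp⟩, by simp⟩
  | insert e t _ ih =>
    obtain ⟨c, hc, ht⟩ := ih
    by_cases he : e ∈ G.edgeSet ∧ c e = none
    · obtain ⟨x, y⟩ := e
      obtain ⟨c', hc', hsub⟩ := hc.exists_extension hdeg he.1 he.2
      refine ⟨c', hc', fun e' ⟨he't, he'E⟩ => hsub ?_⟩
      rcases Finset.mem_insert.mp he't with rfl | he't
      exacts [Set.mem_insert _ _, Set.mem_insert_of_mem _ (ht ⟨he't, he'E⟩)]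
    · refine ⟨c, hc, fun e' ⟨he't, he'E⟩ => ?_⟩
      rcases Finset.mem_insert.mp he't with rfl | he't
      exacts [not_and.mp he he'E, ht ⟨he't, he'E⟩]

theorem exists_edgeColoring [Finite κ] [Nonempty κ]
    (hdeg : ∀ v, (G.neighborSet v).Finite ∧ (G.neighborSet v).ncard < Nat.card κ) :
    ∃ c : Sym2 V → κ, ∀ e₁ ∈ G.edgeSet, ∀ e₂ ∈ G.edgeSet, e₁ ≠ e₂ →
      (∃ v, v ∈ e₁ ∧ v ∈ e₂) → c e₁ ≠ c e₂ := by
  choose col hcol hcov using exists_isPartialEdgeColoring_subset hdeg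
  obtain ⟨χ, hχ⟩ := Finset.rado_selection fun t e => (col t e).getD (Classical.arbitrary κ)
  refine ⟨χ, fun e₁ he₁ e₂ he₂ hne hv => ?_⟩
  obtain ⟨t, hst, hχt⟩ := hχ {e₁, e₂}
  rw [hχt e₁ (by simp), hχt e₂ (by simp)]
  exact (hcol t).getD_ne _ (hcov t ⟨hst (by simp), he₁⟩) (hcov t ⟨hst (by simp), he₂⟩) hne hv

end

theorem statement10_general {V : Type*} (G : SimpleGraph V) (d : ℕ)
    (hdeg : ∀ v : V, {w : V | G.Adj v w}.Finite ∧ {w : V | G.Adj v w}.ncard ≤ d) :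
    ∃ c : Sym2 V → Fin (d + 1),
      ∀ e₁ ∈ G.edgeSet, ∀ e₂ ∈ G.edgeSet, e₁ ≠ e₂ →
        (∃ v : V, v ∈ e₁ ∧ v ∈ e₂) → c e₁ ≠ c e₂ :=
  exists_edgeColoring fun v => ⟨(hdeg v).1, by
    rw [Nat.card_eq_fintype_card, Fintype.card_fin]; exact Nat.lt_succ_of_le (hdeg v).2⟩

/-- Vizing's theorem for countably infinite graphs: a countably
infinite simple graph of maximum degree at most `d` admits a proper edge
colouring with `d + 1` colours. -/
theorem statement10 {V : Type*} [Countable V] [Infinite V] (G : SimpleGraph V) (d : ℕ)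
    (hdeg : ∀ v : V, {w : V | G.Adj v w}.Finite ∧ {w : V | G.Adj v w}.ncard ≤ d) :
    ∃ c : Sym2 V → Fin (d + 1),
      ∀ e₁ ∈ G.edgeSet, ∀ e₂ ∈ G.edgeSet, e₁ ≠ e₂ →
        (∃ v : V, v ∈ e₁ ∧ v ∈ e₂) → c e₁ ≠ c e₂ :=
  statement10_general G d hdeg

end GeomPropT
end
end

section
/- Let X be a space, X_0 a coarse component of X, and Q : ℂ_u[X] → ℂ_u[X_0] the restriction map Q(T) = (T_{x,y})_{x,y ∈ X_0}. Suppose (P_k) is a sequence in ℂ_u[X] and (ε_k) a sequence of nonnegative reals such that for every representation π of ℂ_u[X] on a complex Hilbert space, ‖π(P_k) − p_π‖ ≤ ε_k for all k, where p_π is the orthogonal projection onto the invariant vectors H^π. Then for every representation σ of ℂ_u[X_0] on a complex Hilbert space, ‖σ(Q(P_k)) − p_σ‖ ≤ ε_k for all k, where p_σ is the orthogonal projection onto H^σ. (In particular, the Kazhdan projection of the maximal uniform Roe algebra of X restricts to the Kazhdan projection of the maximal uniform Roe algebra of X_0.) -/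
open scoped ENNReal Classical

noncomputable section

namespace GeomPropT

variable {X : Type*}

variable {H : Type*} [NormedAddCommGroup H] [InnerProductSpace ℂ H]

/-!
The restriction map `Q : ℂ_u[X] → ℂ_u[X₀]` to a coarse component is a unital `*`-homomorphism:
a matrix of controlled support never connects `X₀` with its complement, so the sums defining
`Q(T S)` only run over `X₀`. Hence `σ ∘ Q` is a representation of `ℂ_u[X]` for every
representation `σ` of `ℂ_u[X₀]`. Partial translations of `X` restrict to partial translations of
`X₀`, and those of `X₀` extend by zero to partial translations of `X`, so `σ ∘ Q` and `σ` have
the same invariant vectors and thus the same Kazhdan projection. The hypothesis on `P` applied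
to `σ ∘ Q` is then literally the conclusion.
-/

section Restriction

variable [EMetricSpace X] (x₀ : X)

abbrev CoarseComponent (x₀ : X) : Type _ := {y : X // edist x₀ y < ⊤}

def restrictMat (T : X → X → ℂ) : CoarseComponent x₀ → CoarseComponent x₀ → ℂ :=
  fun a b => T a.1 b.1

def extendMat (v : CoarseComponent x₀ → CoarseComponent x₀ → ℂ) : X → X → ℂ :=
  fun x y => if h : edist x₀ x < ⊤ ∧ edist x₀ y < ⊤ then v ⟨x, h.1⟩ ⟨y, h.2⟩ else 0

variable {x₀}

lemma restrictMat_extendMat (v : CoarseComponent x₀ → CoarseComponent x₀ → ℂ) :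
    restrictMat x₀ (extendMat x₀ v) = v := by
  funext a b
  simp [restrictMat, extendMat, a.2, b.2]

lemma restrictMat_matOne : restrictMat x₀ (matOne : X → X → ℂ) = matOne := by
  funext a b
  simp [restrictMat, matOne, Subtype.ext_iff]

lemma restrictMat_matStar (T : X → X → ℂ) :
    restrictMat x₀ (matStar T) = matStar (restrictMat x₀ T) := rfl

lemma controlled_matSupport_restrictMat {T : X → X → ℂ} (h : Controlled (matSupport T)) :
    Controlled (matSupport (restrictMat x₀ T)) := by
  obtain ⟨R, hR, hsub⟩ := h
  exact ⟨R, hR, fun p hp => hsub (show ((p.1 : X), (p.2 : X)) ∈ matSupport T from hp)⟩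

lemma CuElem.restrict {T : X → X → ℂ} (h : CuElem T) : CuElem (restrictMat x₀ T) :=
  ⟨h.1.imp fun _ hM a b => hM a b, controlled_matSupport_restrictMat h.2⟩

lemma restrictMat_matMul {T : X → X → ℂ} (hT : Controlled (matSupport T)) (S : X → X → ℂ) :
    restrictMat x₀ (matMul T S) = matMul (restrictMat x₀ T) (restrictMat x₀ S) := by
  obtain ⟨R, hR, hsub⟩ := hT
  funext a b
  have hsupp : Function.support (fun z => T a.1 z * S z b.1) ⊆ {z | edist x₀ z < ⊤} := by
    intro z hz
    have hTz : edist a.1 z ≤ R :=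
      hsub (show (a.1, z) ∈ matSupport T from left_ne_zero_of_mul hz)
    exact (edist_triangle x₀ a.1 z).trans_lt (ENNReal.add_lt_top.2 ⟨a.2, hTz.trans_lt hR⟩)
  exact (tsum_subtype_eq_of_support_subset hsupp).symm

lemma restrictMat_matMul_matStar {v : X → X → ℂ} (hv : Controlled (matSupport v)) :
    restrictMat x₀ (matMul v (matStar v)) =
      matMul (restrictMat x₀ v) (matStar (restrictMat x₀ v)) := by
  rw [restrictMat_matMul hv, restrictMat_matStar]

lemma IsPartialTranslation.restrict {v : X → X → ℂ} (hv : IsPartialTranslation v) :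
    IsPartialTranslation (restrictMat x₀ v) := by
  obtain ⟨h01, hrow, hcol, hctrl⟩ := hv
  exact ⟨fun a b => h01 a b, fun a b b' h h' => Subtype.ext (hrow a b b' h h'),
    fun a a' b h h' => Subtype.ext (hcol a a' b h h'), controlled_matSupport_restrictMat hctrl⟩

lemma extendMat_ne_zero {v : CoarseComponent x₀ → CoarseComponent x₀ → ℂ} {x y : X}
    (h : extendMat x₀ v x y ≠ 0) :
    ∃ (hx : edist x₀ x < ⊤) (hy : edist x₀ y < ⊤), v ⟨x, hx⟩ ⟨y, hy⟩ = extendMat x₀ v x y := by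
  unfold extendMat at h ⊢
  split_ifs at h ⊢ with hxy
  · exact ⟨hxy.1, hxy.2, rfl⟩
  · exact absurd rfl h

lemma IsPartialTranslation.extend {v : CoarseComponent x₀ → CoarseComponent x₀ → ℂ}
    (hv : IsPartialTranslation v) : IsPartialTranslation (extendMat x₀ v) := by
  obtain ⟨h01, hrow, hcol, R, hR, hsub⟩ := hv
  have entry_eq_one {x y : X} (h : extendMat x₀ v x y = 1) :
      ∃ (hx : edist x₀ x < ⊤) (hy : edist x₀ y < ⊤), v ⟨x, hx⟩ ⟨y, hy⟩ = 1 := by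
    obtain ⟨hx, hy, hxy⟩ := extendMat_ne_zero (h ▸ one_ne_zero)
    exact ⟨hx, hy, hxy.trans h⟩
  refine ⟨fun x y => ?_, fun x y y' h h' => ?_, fun x x' y h h' => ?_, R, hR, fun p hp => ?_⟩
  · by_cases h : extendMat x₀ v x y = 0
    · exact Or.inl h
    · obtain ⟨_, _, hxy⟩ := extendMat_ne_zero h
      exact hxy ▸ h01 _ _
  · obtain ⟨hx, hy, hxy⟩ := entry_eq_one h
    obtain ⟨_, hy', hxy'⟩ := entry_eq_one h'
    exact congrArg Subtype.val (hrow ⟨x, hx⟩ ⟨y, hy⟩ ⟨y', hy'⟩ hxy hxy')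
  · obtain ⟨hx, hy, hxy⟩ := entry_eq_one h
    obtain ⟨hx', _, hxy'⟩ := entry_eq_one h'
    exact congrArg Subtype.val (hcol ⟨x, hx⟩ ⟨x', hx'⟩ ⟨y, hy⟩ hxy hxy')
  · obtain ⟨hx, hy, hxy⟩ := extendMat_ne_zero hp
    have hp' : v ⟨p.1, hx⟩ ⟨p.2, hy⟩ ≠ 0 := hxy ▸ hp
    exact hsub (show ((⟨p.1, hx⟩ : CoarseComponent x₀), ⟨p.2, hy⟩) ∈ matSupport v from hp')

variable {σ : (CoarseComponent x₀ → CoarseComponent x₀ → ℂ) → (H →L[ℂ] H)}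

lemma IsRepresentation.comp_restrictMat [CompleteSpace H] (hσ : IsRepresentation σ) :
    IsRepresentation (fun T : X → X → ℂ => σ (restrictMat x₀ T)) where
  map_one := by rw [restrictMat_matOne, hσ.map_one]
  map_add T S hT hS := hσ.map_add _ _ hT.restrict hS.restrict
  map_smul c T hT := hσ.map_smul c _ hT.restrict
  map_mul T S hT hS := by
    simp only [restrictMat_matMul hT.2, hσ.map_mul _ _ hT.restrict hS.restrict]
  map_star T hT := hσ.map_star _ hT.restrict

lemma invariantSubmodule_comp_restrictMat :
    invariantSubmodule (fun T : X → X → ℂ => σ (restrictMat x₀ T)) = invariantSubmodule σ := by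
  ext ξ
  constructor
  · intro hξ v hv
    simpa only [restrictMat_matMul_matStar hv.extend.2.2.2, restrictMat_extendMat] using
      hξ (extendMat x₀ v) hv.extend
  · intro hξ v hv
    show σ (restrictMat x₀ v) ξ = σ (restrictMat x₀ (matMul v (matStar v))) ξ
    rw [restrictMat_matMul_matStar hv.2.2.2]
    exact hξ _ hv.restrict

end Restriction

theorem statement14_general {X : Type*} [EMetricSpace X] (x₀ : X)
    (P : ℕ → X → X → ℂ) (ε : ℕ → ℝ)
    (hbound : ∀ (H : Type) [NormedAddCommGroup H] [InnerProductSpace ℂ H] [CompleteSpace H]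
      (π : (X → X → ℂ) → (H →L[ℂ] H)), IsRepresentation π →
      ∀ p : H →L[ℂ] H, IsOrthoProjOnto p (invariantSubmodule π) →
        ∀ k : ℕ, ‖π (P k) - p‖ ≤ ε k) :
    ∀ (H : Type) [NormedAddCommGroup H] [InnerProductSpace ℂ H] [CompleteSpace H]
      (σ : ({y : X // edist x₀ y < ⊤} → {y : X // edist x₀ y < ⊤} → ℂ) → (H →L[ℂ] H)),
      IsRepresentation σ →
      ∀ p : H →L[ℂ] H, IsOrthoProjOnto p (invariantSubmodule σ) →
        ∀ k : ℕ, ‖σ (fun a b => P k a.1 b.1) - p‖ ≤ ε k := by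
  intro H _ _ _ σ hσ p hp
  refine hbound H (fun T => σ (restrictMat x₀ T)) hσ.comp_restrictMat p ?_
  rwa [invariantSubmodule_comp_restrictMat]

/-- If `P_k ∈ ℂ_u[X]` approximate the Kazhdan projection uniformly
over all representations of `ℂ_u[X]` with errors `ε_k`, then their restrictions
`Q(P_k)` to a coarse component `X₀` approximate the Kazhdan projection uniformly
over all representations of `ℂ_u[X₀]` with the same errors. -/
theorem statement14 {X : Type*} [EMetricSpace X] (hX : IsSpace X) (x₀ : X)
    (P : ℕ → X → X → ℂ) (hP : ∀ k, CuElem (P k)) (ε : ℕ → ℝ) (hε : ∀ k, 0 ≤ ε k)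
    (hbound : ∀ (H : Type) [NormedAddCommGroup H] [InnerProductSpace ℂ H] [CompleteSpace H]
      (π : (X → X → ℂ) → (H →L[ℂ] H)), IsRepresentation π →
      ∀ p : H →L[ℂ] H, IsOrthoProjOnto p (invariantSubmodule π) →
        ∀ k : ℕ, ‖π (P k) - p‖ ≤ ε k) :
    ∀ (H : Type) [NormedAddCommGroup H] [InnerProductSpace ℂ H] [CompleteSpace H]
      (σ : ({y : X // edist x₀ y < ⊤} → {y : X // edist x₀ y < ⊤} → ℂ) → (H →L[ℂ] H)),
      IsRepresentation σ →
      ∀ p : H →L[ℂ] H, IsOrthoProjOnto p (invariantSubmodule σ) →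
        ∀ k : ℕ, ‖σ (fun a b => P k a.1 b.1) - p‖ ≤ ε k :=
  statement14_general x₀ P ε hbound

end GeomPropT
end
end
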